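/- arXiv:1910.08640 — 3 statements merged into one kernel-verified Lean document; each statement's English description precedes it below -/
import Mathlib

section
/- Let h : ℝ^d → [0,1] be any measurable function and σ > 0. Define the Gaussian smoothing ĥ(x) = E_{ε ~ N(0, σ²I)}[h(x + ε)]. Then for any x, δ ∈ ℝ^d, ĥ(x + δ) ≤ Φ(Φ⁻¹(ĥ(x)) + ‖δ‖₂/σ), where Φ is the standard Gaussian CDF. -/
open MeasureTheory ProbabilityTheory Real Set
open scoped RealInnerProductSpace NNReal

noncomputable def stdGaussCDF (x : ℝ) : ℝ := ((gaussianReal 0 1) (Set.Iic x)).toReal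

noncomputable def stdGaussCDFInv : ℝ → ℝ := Function.invFun stdGaussCDF

noncomputable def isoGaussian (d : ℕ) (σ : ℝ) : Measure (EuclideanSpace ℝ (Fin d)) :=
  Measure.map (MeasurableEquiv.toLp 2 (Fin d → ℝ))
    (Measure.pi fun _ : Fin d => gaussianReal 0 ⟨σ^2, sq_nonneg σ⟩)

open scoped ENNReal

lemma SSB.ofReal_stdGaussCDF (y : ℝ) :
    ENNReal.ofReal (stdGaussCDF y) = gaussianReal 0 1 (Set.Iic y) := by
  rw [stdGaussCDF, ENNReal.ofReal_toReal (measure_ne_top _ _)]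

lemma SSB.stdGaussCDF_mono : Monotone stdGaussCDF := by
  intro a b hab
  exact ENNReal.toReal_mono (measure_ne_top _ _) (measure_mono (Set.Iic_subset_Iic.2 hab))

lemma SSB.measure_Ioc_le (a b : ℝ) (hab : a ≤ b) :
    gaussianReal 0 1 (Set.Ioc a b) ≤ ENNReal.ofReal ((Real.sqrt (2 * π))⁻¹ * (b - a)) := by
  rw [gaussianReal_apply 0 one_ne_zero (Set.Ioc a b)]
  have hle : ∀ x ∈ Set.Ioc a b, gaussianPDF 0 1 x ≤ ENNReal.ofReal (Real.sqrt (2 * π))⁻¹ := by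
    intro x _
    rw [gaussianPDF]
    refine ENNReal.ofReal_le_ofReal ?_
    rw [gaussianPDFReal]
    have h1 : rexp (-(x - 0) ^ 2 / (2 * (1:ℝ≥0))) ≤ 1 := by
      rw [Real.exp_le_one_iff]
      exact div_nonpos_of_nonpos_of_nonneg (neg_nonpos.2 (sq_nonneg _)) (by positivity)
    have h0 : (0:ℝ) ≤ (Real.sqrt (2 * π * (1:ℝ≥0)))⁻¹ := by positivity
    calc (Real.sqrt (2 * π * (1:ℝ≥0)))⁻¹ * rexp (-(x - 0) ^ 2 / (2 * (1:ℝ≥0)))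
        ≤ (Real.sqrt (2 * π * (1:ℝ≥0)))⁻¹ * 1 := by
          exact mul_le_mul_of_nonneg_left h1 h0
      _ = (Real.sqrt (2 * π))⁻¹ := by norm_num
  calc ∫⁻ x in Set.Ioc a b, gaussianPDF 0 1 x
      ≤ ∫⁻ _ in Set.Ioc a b, ENNReal.ofReal (Real.sqrt (2 * π))⁻¹ :=
        setLIntegral_mono (by fun_prop) hle
    _ = ENNReal.ofReal (Real.sqrt (2 * π))⁻¹ * volume (Set.Ioc a b) := by
        rw [setLIntegral_const]
    _ = ENNReal.ofReal ((Real.sqrt (2 * π))⁻¹ * (b - a)) := by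
        rw [Real.volume_Ioc, ENNReal.ofReal_mul (by positivity)]

lemma SSB.stdGaussCDF_continuous : Continuous stdGaussCDF := by
  have hlip : LipschitzWith ⟨(Real.sqrt (2 * π))⁻¹, by positivity⟩ stdGaussCDF := by
    apply LipschitzWith.of_dist_le_mul
    intro a b
    wlog hab : b ≤ a generalizing a b
    · rw [dist_comm, dist_comm a b]; exact this b a (le_of_not_ge hab)
    have hmono := SSB.stdGaussCDF_mono hab
    rw [Real.dist_eq, abs_of_nonneg (by linarith), Real.dist_eq, abs_of_nonneg (by linarith)]
    have key : stdGaussCDF a - stdGaussCDF b = (gaussianReal 0 1 (Set.Ioc b a)).toReal := by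
      rw [stdGaussCDF, stdGaussCDF, ← ENNReal.toReal_sub_of_le
        (measure_mono (Set.Iic_subset_Iic.2 hab)) (measure_ne_top _ _)]
      congr 1
      rw [← Set.Iic_sdiff_Iic, measure_diff (Set.Iic_subset_Iic.2 hab)
        measurableSet_Iic.nullMeasurableSet (measure_ne_top _ _)]
    rw [key]
    have := SSB.measure_Ioc_le b a hab
    calc (gaussianReal 0 1 (Set.Ioc b a)).toReal
        ≤ (ENNReal.ofReal ((Real.sqrt (2 * π))⁻¹ * (a - b))).toReal :=
          ENNReal.toReal_mono ENNReal.ofReal_ne_top this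
      _ = (Real.sqrt (2 * π))⁻¹ * (a - b) := ENNReal.toReal_ofReal (mul_nonneg (by positivity) (sub_nonneg.2 hab))
      _ = (⟨(Real.sqrt (2 * π))⁻¹, by positivity⟩ : ℝ≥0) * (a - b) := rfl
  exact hlip.continuous

lemma SSB.stdGaussCDF_tendsto_atTop :
    Filter.Tendsto stdGaussCDF Filter.atTop (nhds 1) := by
  have h := MeasureTheory.tendsto_measure_Iic_atTop (μ := gaussianReal 0 1)
  have huniv : (gaussianReal 0 1) Set.univ = 1 := measure_univ
  rw [huniv] at h
  have := (ENNReal.tendsto_toReal (by norm_num : (1:ℝ≥0∞) ≠ ⊤)).comp h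
  simp only [ENNReal.toReal_one] at this
  exact this

lemma SSB.stdGaussCDF_tendsto_atBot :
    Filter.Tendsto stdGaussCDF Filter.atBot (nhds 0) := by
  -- squeeze: 0 ≤ Φ y ≤ 1 - (gaussianReal 0 1 (Ici (y+1))).toReal
  have h := MeasureTheory.tendsto_measure_Ici_atBot (μ := gaussianReal 0 1)
  have huniv : (gaussianReal 0 1) Set.univ = 1 := measure_univ
  rw [huniv] at h
  have h2 : Filter.Tendsto (fun y : ℝ => (gaussianReal 0 1 (Set.Ici (y+1))).toReal)
      Filter.atBot (nhds 1) := by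
    have := (ENNReal.tendsto_toReal (by norm_num : (1:ℝ≥0∞) ≠ ⊤)).comp h
    simp only [ENNReal.toReal_one] at this
    exact this.comp (Filter.tendsto_atBot_add_const_right _ 1 Filter.tendsto_id)
  have h3 : Filter.Tendsto (fun y : ℝ => 1 - (gaussianReal 0 1 (Set.Ici (y+1))).toReal)
      Filter.atBot (nhds 0) := by
    have := (tendsto_const_nhds (x := (1:ℝ)) (f := Filter.atBot (α := ℝ))).sub h2
    simpa using this
  refine squeeze_zero (fun y => ?_) (fun y => ?_) h3
  · exact ENNReal.toReal_nonneg
  · have hdisj : Disjoint (Set.Iic y) (Set.Ici (y+1)) := by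
      rw [Set.disjoint_left]
      intro z hz hz'
      simp only [Set.mem_Iic] at hz
      simp only [Set.mem_Ici] at hz'
      linarith
    have hun : (gaussianReal 0 1) (Set.Iic y) + (gaussianReal 0 1) (Set.Ici (y+1))
        ≤ 1 := by
      rw [← measure_union hdisj measurableSet_Ici, ← huniv]
      exact measure_mono (Set.subset_univ _)
    have hIic := measure_ne_top (gaussianReal 0 1) (Set.Iic y)
    have hIci := measure_ne_top (gaussianReal 0 1) (Set.Ici (y+1))
    rw [stdGaussCDF]
    have := ENNReal.toReal_mono (by norm_num) hun
    rw [ENNReal.toReal_add hIic hIci, ENNReal.toReal_one] at this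
    linarith

lemma SSB.stdGaussCDF_surj {p : ℝ} (hp : p ∈ Set.Ioo (0:ℝ) 1) :
    ∃ y, stdGaussCDF y = p := by
  obtain ⟨a, ha⟩ : ∃ a, stdGaussCDF a < p := by
    have := (SSB.stdGaussCDF_tendsto_atBot.eventually (eventually_lt_nhds hp.1)).exists
    simpa using this
  obtain ⟨b, hb⟩ : ∃ b, p < stdGaussCDF b := by
    have := (SSB.stdGaussCDF_tendsto_atTop.eventually (eventually_gt_nhds hp.2)).exists
    simpa using this
  rcases le_total a b with hab | hab
  · have := intermediate_value_Icc hab SSB.stdGaussCDF_continuous.continuousOn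
    obtain ⟨y, _, hy⟩ := this ⟨ha.le, hb.le⟩
    exact ⟨y, hy⟩
  · exact absurd ((SSB.stdGaussCDF_mono hab).trans_lt ha) (not_lt.2 hb.le)

lemma SSB.stdGaussCDF_invFun {p : ℝ} (hp : p ∈ Set.Ioo (0:ℝ) 1) :
    stdGaussCDF (stdGaussCDFInv p) = p :=
  Function.invFun_eq (SSB.stdGaussCDF_surj hp)

lemma SSB.gaussianReal_Ici (w : ℝ≥0) (hw : w ≠ 0) (c : ℝ) :
    gaussianReal 0 w (Set.Ici c) = ENNReal.ofReal (stdGaussCDF (-c / Real.sqrt w)) := by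
  have hw' : (0:ℝ) < (w:ℝ) := by positivity
  have hs : (0:ℝ) < Real.sqrt w := Real.sqrt_pos.2 hw'
  -- gaussianReal 0 w = map (√w * ·) (gaussianReal 0 1)
  have hmap : (gaussianReal 0 1).map (fun x => Real.sqrt (w:ℝ) * x) = gaussianReal 0 w := by
    rw [gaussianReal_map_const_mul (Real.sqrt (w:ℝ))]
    congr 1
    · ring
    · ext
      simp [Real.sq_sqrt hw'.le]
  -- symmetry of standard gaussian
  have hneg : (gaussianReal 0 1).map (fun x : ℝ => (-1 : ℝ) * x) = gaussianReal 0 1 := by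
    rw [gaussianReal_map_const_mul (-1 : ℝ)]
    norm_num
  rw [← hmap, Measure.map_apply (by fun_prop) measurableSet_Ici]
  have hpre : (fun x => Real.sqrt (w:ℝ) * x) ⁻¹' Set.Ici c = Set.Ici (c / Real.sqrt w) := by
    ext z
    simp only [Set.mem_preimage, Set.mem_Ici]
    rw [div_le_iff₀ hs, mul_comm]
  rw [hpre]
  have key : ∀ t : ℝ, gaussianReal 0 1 (Set.Ici t) = gaussianReal 0 1 (Set.Iic (-t)) := by
    intro t
    conv_lhs => rw [← hneg]
    rw [Measure.map_apply (by fun_prop) measurableSet_Ici]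
    congr 1
    ext z
    simp only [Set.mem_preimage, Set.mem_Ici, Set.mem_Iic]
    constructor <;> intro hz <;> linarith
  rw [key, SSB.ofReal_stdGaussCDF, neg_div]

lemma SSB.pdf_conv_pointwise (v w : ℝ≥0) (hv : v ≠ 0) (hw : w ≠ 0) (y x : ℝ) :
    gaussianPDFReal 0 v x * gaussianPDFReal 0 w (y - x) =
      gaussianPDFReal 0 (v + w) y * gaussianPDFReal ((v:ℝ) * y / ((v:ℝ) + w)) (v * w / (v + w)) x := by
  have ha : (0:ℝ) < v := by positivity
  have hb : (0:ℝ) < w := by positivity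
  have hu : ((v * w / (v + w) : ℝ≥0) : ℝ) = (v:ℝ) * w / ((v:ℝ) + w) := by push_cast; ring
  rw [gaussianPDFReal, gaussianPDFReal, gaussianPDFReal, gaussianPDFReal, hu]
  have hc : (√(2 * π * v))⁻¹ * (√(2 * π * w))⁻¹
      = (√(2 * π * ((v:ℝ) + w)))⁻¹ * (√(2 * π * ((v:ℝ) * w / ((v:ℝ) + w))))⁻¹ := by
    rw [← mul_inv, ← mul_inv, ← Real.sqrt_mul (by positivity), ← Real.sqrt_mul (by positivity)]
    congr 2
    push_cast
    field_simp
  have he : rexp (-(x - 0) ^ 2 / (2 * v)) * rexp (-(y - x - 0) ^ 2 / (2 * w))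
      = rexp (-(y - 0) ^ 2 / (2 * ((v:ℝ) + w)))
        * rexp (-(x - (v:ℝ) * y / ((v:ℝ) + w)) ^ 2 / (2 * ((v:ℝ) * w / ((v:ℝ) + w)))) := by
    rw [← Real.exp_add, ← Real.exp_add]
    congr 1
    field_simp
    ring
  push_cast
  push_cast at hc he
  calc (√(2 * π * v))⁻¹ * rexp (-(x - 0) ^ 2 / (2 * v))
      * ((√(2 * π * w))⁻¹ * rexp (-(y - x - 0) ^ 2 / (2 * w)))
      = ((√(2 * π * v))⁻¹ * (√(2 * π * w))⁻¹)
        * (rexp (-(x - 0) ^ 2 / (2 * v)) * rexp (-(y - x - 0) ^ 2 / (2 * w))) := by ring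
    _ = _ := by rw [hc, he]; ring

lemma SSB.lintegral_pdf_conv (v w : ℝ≥0) (hv : v ≠ 0) (hw : w ≠ 0) (y : ℝ) :
    ∫⁻ x, gaussianPDF 0 v x * gaussianPDF 0 w (y - x) = gaussianPDF 0 (v + w) y := by
  have hu : (v * w / (v + w) : ℝ≥0) ≠ 0 := by
    have : (0:ℝ) < ((v * w / (v + w) : ℝ≥0) : ℝ) := by
      push_cast
      have ha : (0:ℝ) < v := by positivity
      have hb : (0:ℝ) < w := by positivity
      positivity
    exact fun h => by simp [h] at this
  have hpt : ∀ x, gaussianPDF 0 v x * gaussianPDF 0 w (y - x)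
      = gaussianPDF 0 (v + w) y * gaussianPDF ((v:ℝ) * y / ((v:ℝ) + w)) (v * w / (v + w)) x := by
    intro x
    rw [gaussianPDF, gaussianPDF, gaussianPDF, gaussianPDF,
      ← ENNReal.ofReal_mul (gaussianPDFReal_nonneg _ _ _),
      ← ENNReal.ofReal_mul (gaussianPDFReal_nonneg _ _ _),
      SSB.pdf_conv_pointwise v w hv hw y x]
  simp_rw [hpt]
  rw [lintegral_const_mul _ (measurable_gaussianPDF _ _),
    lintegral_gaussianPDF_eq_one _ hu, mul_one]

lemma SSB.gauss_conv (v w : ℝ≥0) :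
    Measure.map (fun p : ℝ × ℝ => p.1 + p.2) ((gaussianReal 0 v).prod (gaussianReal 0 w))
      = gaussianReal 0 (v + w) := by
  by_cases hv : v = 0
  · subst hv
    rw [gaussianReal_zero_var, Measure.dirac_prod, Measure.map_map (by fun_prop) (by fun_prop)]
    simp only [Function.comp_def, zero_add]
    rw [Measure.map_id']
  by_cases hw : w = 0
  · subst hw
    rw [gaussianReal_zero_var, Measure.prod_dirac, Measure.map_map (by fun_prop) (by fun_prop)]
    simp only [Function.comp_def, add_zero]
    rw [Measure.map_id']
  have hvw : v + w ≠ 0 := by simp [hv, hw]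
  ext s hs
  rw [Measure.map_apply measurable_add hs, Measure.prod_apply (measurable_add hs)]
  set I : ℝ → ℝ≥0∞ := s.indicator (1 : ℝ → ℝ≥0∞) with hI
  have hImeas : Measurable I := measurable_one.indicator hs
  have hIle : ∀ y, I y ≤ 1 := by
    intro y
    by_cases hy : y ∈ s <;> simp [hI, hy]
  have hstep : ∀ x : ℝ, gaussianReal 0 w (Prod.mk x ⁻¹' ((fun p : ℝ × ℝ => p.1 + p.2) ⁻¹' s))
      = ∫⁻ y, I y * gaussianPDF 0 w (y - x) ∂volume := by
    intro x
    have hA : MeasurableSet {y : ℝ | x + y ∈ s} := (measurable_const_add x) hs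
    have h1 : gaussianReal 0 w (Prod.mk x ⁻¹' ((fun p : ℝ × ℝ => p.1 + p.2) ⁻¹' s))
        = ∫⁻ y, ({y : ℝ | x + y ∈ s}).indicator (1 : ℝ → ℝ≥0∞) y ∂(gaussianReal 0 w) := by
      rw [lintegral_indicator_one hA]; rfl
    rw [h1, gaussianReal_of_var_ne_zero 0 hw,
      lintegral_withDensity_eq_lintegral_mul _ (measurable_gaussianPDF 0 w)
        (measurable_one.indicator hA)]
    simp only [Pi.mul_apply]
    have h2 : ∀ y : ℝ,
        gaussianPDF 0 w y * ({y : ℝ | x + y ∈ s}).indicator (1 : ℝ → ℝ≥0∞) y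
        = (fun z => I z * gaussianPDF 0 w (z - x)) (x + y) := by
      intro y
      simp only [hI]
      by_cases hy : x + y ∈ s
      · have hy' : y ∈ {y : ℝ | x + y ∈ s} := hy
        simp [Set.indicator_of_mem hy, Set.indicator_of_mem hy', add_sub_cancel_left, mul_comm]
      · have hy' : y ∉ {y : ℝ | x + y ∈ s} := hy
        simp [Set.indicator_of_notMem hy, Set.indicator_of_notMem hy']
    calc ∫⁻ y, gaussianPDF 0 w y * ({y : ℝ | x + y ∈ s}).indicator (1 : ℝ → ℝ≥0∞) y ∂volume
        = ∫⁻ y, (fun z => I z * gaussianPDF 0 w (z - x)) (x + y) ∂volume := by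
          simp_rw [h2]
      _ = ∫⁻ z, I z * gaussianPDF 0 w (z - x) ∂volume :=
          lintegral_add_left_eq_self (fun z => I z * gaussianPDF 0 w (z - x)) x
  simp_rw [hstep]
  rw [gaussianReal_of_var_ne_zero 0 hv,
    lintegral_withDensity_eq_lintegral_mul _ (measurable_gaussianPDF 0 v)
      (by
        apply Measurable.lintegral_prod_right
        exact ((hImeas.comp measurable_snd)).mul
          ((measurable_gaussianPDF 0 w).comp (measurable_snd.sub measurable_fst)))]
  simp only [Pi.mul_apply]
  have h4 : ∀ a : ℝ, gaussianPDF 0 v a * ∫⁻ y, I y * gaussianPDF 0 w (y - a) ∂volume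
      = ∫⁻ y, gaussianPDF 0 v a * (I y * gaussianPDF 0 w (y - a)) ∂volume := by
    intro a
    have hmul : Measurable (fun y : ℝ => I y * gaussianPDF 0 w (y - a)) :=
      hImeas.mul ((measurable_gaussianPDF 0 w).comp (measurable_id.sub measurable_const))
    rw [lintegral_const_mul _ hmul]
  simp_rw [h4]
  rw [lintegral_lintegral_swap]
  · have h3 : ∀ y : ℝ, ∫⁻ x, gaussianPDF 0 v x * (I y * gaussianPDF 0 w (y - x)) ∂volume
        = I y * gaussianPDF 0 (v + w) y := by
      intro y
      simp_rw [mul_left_comm (gaussianPDF 0 v _)]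
      rw [lintegral_const_mul' _ _ (lt_of_le_of_lt (hIle y) ENNReal.one_lt_top).ne,
        SSB.lintegral_pdf_conv v w hv hw y]
    simp_rw [h3]
    rw [gaussianReal_apply 0 hvw s, ← lintegral_indicator hs]
    congr 1
    ext y
    by_cases hy : y ∈ s <;> simp [hI, hy]
  · apply Measurable.aemeasurable
    have : Measurable (fun p : ℝ × ℝ => gaussianPDF 0 v p.1 * (I p.2 * gaussianPDF 0 w (p.2 - p.1))) :=
      ((measurable_gaussianPDF 0 v).comp measurable_fst).mul
        ((hImeas.comp measurable_snd).mul
          ((measurable_gaussianPDF 0 w).comp (measurable_snd.sub measurable_fst)))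
    exact this

lemma SSB.map_sum_pi (v : ℝ≥0) : ∀ (n : ℕ) (u : Fin n → ℝ),
    Measure.map (fun ε : Fin n → ℝ => ∑ i, u i * ε i) (Measure.pi fun _ => gaussianReal 0 v)
      = gaussianReal 0 ((∑ i, (u i)^2 : ℝ).toNNReal * v) := by
  intro n
  induction n with
  | zero =>
    intro u
    have h0 : (fun ε : Fin 0 → ℝ => ∑ i, u i * ε i) = fun _ => (0:ℝ) := by
      funext ε; simp
    rw [h0, Measure.map_const]
    simp [gaussianReal_zero_var]
  | succ n ih =>
    intro u
    have hmp := measurePreserving_piFinSuccAbove (fun _ : Fin (n+1) => gaussianReal 0 v) 0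
    set e := MeasurableEquiv.piFinSuccAbove (fun _ : Fin (n+1) => ℝ) 0 with he
    have hcomp : (fun ε : Fin (n+1) → ℝ => ∑ i, u i * ε i)
        = (fun q : ℝ × (Fin n → ℝ) => u 0 * q.1 + ∑ j : Fin n, u j.succ * q.2 j) ∘ e := by
      funext ε
      simp only [Function.comp_apply, he, MeasurableEquiv.piFinSuccAbove_apply]
      rw [Fin.sum_univ_succ]
      rfl
    have hg : Measurable (fun q : ℝ × (Fin n → ℝ) => u 0 * q.1 + ∑ j : Fin n, u j.succ * q.2 j) := by
      apply Measurable.add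
      · exact measurable_fst.const_mul _
      · exact Finset.measurable_sum _ fun j _ => (measurable_snd.eval).const_mul _
    rw [hcomp, ← Measure.map_map hg e.measurable, hmp.map_eq]
    have hcomp2 : (fun q : ℝ × (Fin n → ℝ) => u 0 * q.1 + ∑ j : Fin n, u j.succ * q.2 j)
        = (fun p : ℝ × ℝ => p.1 + p.2) ∘
          (Prod.map (fun t : ℝ => u 0 * t) (fun y : Fin n → ℝ => ∑ j : Fin n, u j.succ * y j)) := by
      funext q; rfl
    have hψ : Measurable (fun y : Fin n → ℝ => ∑ j : Fin n, u j.succ * y j) :=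
      Finset.measurable_sum _ fun j _ => (measurable_pi_apply j).const_mul _
    rw [hcomp2, ← Measure.map_map measurable_add (Measurable.prodMap (measurable_const_mul _) hψ),
      ← Measure.map_prod_map _ _ (measurable_const_mul _) hψ,
      gaussianReal_map_const_mul (u 0), ih (fun j => u j.succ), mul_zero, SSB.gauss_conv]
    congr 1
    rw [← add_mul]
    congr 1
    rw [← NNReal.coe_inj]
    push_cast [Real.coe_toNNReal _ (by positivity : (0:ℝ) ≤ ∑ j : Fin n, (u j.succ)^2),
      Real.coe_toNNReal _ (by positivity : (0:ℝ) ≤ ∑ i : Fin (n+1), (u i)^2)]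
    rw [Fin.sum_univ_succ fun i => (u i)^2]

lemma SSB.shift1 (v : ℝ≥0) (hv : v ≠ 0) (a : ℝ) (f : ℝ → ℝ≥0∞) (hf : Measurable f) :
    ∫⁻ t, f (a + t) ∂(gaussianReal 0 v) =
      ∫⁻ t, f t * ENNReal.ofReal (rexp (a * t / v - a^2 / (2*(v:ℝ)))) ∂(gaussianReal 0 v) := by
  have hv' : (0:ℝ) < v := by positivity
  have hc : Measurable fun t : ℝ => ENNReal.ofReal (rexp (a * t / v - a^2 / (2*(v:ℝ)))) :=
    Measurable.ennreal_ofReal (by fun_prop)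
  have hpdf : ∀ z : ℝ, gaussianPDF 0 v (z - a)
      = gaussianPDF 0 v z * ENNReal.ofReal (rexp (a * z / v - a^2 / (2*(v:ℝ)))) := by
    intro z
    rw [gaussianPDF, gaussianPDF, ← ENNReal.ofReal_mul (gaussianPDFReal_nonneg _ _ _)]
    congr 1
    rw [gaussianPDFReal, gaussianPDFReal, mul_assoc ((√(2 * π * (v:ℝ)))⁻¹), ← Real.exp_add]
    congr 2
    field_simp
    ring
  have hg1 : Measurable fun t : ℝ => f (a + t) := hf.comp (measurable_const_add a)
  rw [gaussianReal_of_var_ne_zero 0 hv,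
    lintegral_withDensity_eq_lintegral_mul _ (measurable_gaussianPDF 0 v) hg1,
    lintegral_withDensity_eq_lintegral_mul _ (measurable_gaussianPDF 0 v)
      (show Measurable fun t => f t * ENNReal.ofReal (rexp (a * t / v - a^2 / (2*(v:ℝ)))) from hf.mul hc)]
  simp only [Pi.mul_apply, Function.comp_apply]
  calc ∫⁻ t, gaussianPDF 0 v t * f (a + t) ∂volume
      = ∫⁻ t, (fun z => gaussianPDF 0 v (z - a) * f z) (a + t) ∂volume := by
        simp_rw [add_sub_cancel_left]
    _ = ∫⁻ z, gaussianPDF 0 v (z - a) * f z ∂volume :=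
        lintegral_add_left_eq_self (fun z => gaussianPDF 0 v (z - a) * f z) a
    _ = ∫⁻ z, gaussianPDF 0 v z * (f z * ENNReal.ofReal (rexp (a * z / v - a^2 / (2*(v:ℝ))))) ∂volume := by
        refine lintegral_congr fun z => ?_
        rw [hpdf z]
        ring

lemma SSB.pi_shift (v : ℝ≥0) (hv : v ≠ 0) : ∀ (n : ℕ) (b : Fin n → ℝ)
    (f : (Fin n → ℝ) → ℝ≥0∞), Measurable f →
    ∫⁻ ε, f (b + ε) ∂(Measure.pi fun _ : Fin n => gaussianReal 0 v)
      = ∫⁻ ε, f ε * ENNReal.ofReal (rexp ((∑ i, b i * ε i) / v - (∑ i, (b i)^2) / (2*(v:ℝ))))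
          ∂(Measure.pi fun _ : Fin n => gaussianReal 0 v) := by
  intro n
  induction n with
  | zero =>
    intro b f hf
    have hb : ∀ ε : Fin 0 → ℝ, b + ε = ε := fun ε => Subsingleton.elim _ _
    simp [hb]
  | succ n ih =>
    intro b f hf
    set N := gaussianReal 0 v with hN
    set πn := Measure.pi fun _ : Fin n => gaussianReal 0 v with hπn
    set e := MeasurableEquiv.piFinSuccAbove (fun _ : Fin (n+1) => ℝ) 0 with he
    have hmp : MeasurePreserving e.symm (N.prod πn)
        (Measure.pi fun _ : Fin (n+1) => gaussianReal 0 v) :=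
      (measurePreserving_piFinSuccAbove (fun _ : Fin (n+1) => gaussianReal 0 v) 0).symm e
    set tb : Fin n → ℝ := fun j => b j.succ with htb
    have h0 : ∀ (s : ℝ) (y : Fin n → ℝ), e.symm (s, y) 0 = s := by
      intro s y; simp [he, MeasurableEquiv.piFinSuccAbove_symm_apply]
    have hsucc : ∀ (s : ℝ) (y : Fin n → ℝ) (j : Fin n), e.symm (s, y) j.succ = y j := by
      intro s y j
      simp [he, MeasurableEquiv.piFinSuccAbove_symm_apply]
    have hadd : ∀ (s : ℝ) (y : Fin n → ℝ), b + e.symm (s, y) = e.symm (b 0 + s, tb + y) := by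
      intro s y
      funext i
      refine Fin.cases ?_ (fun j => ?_) i
      · simp only [Pi.add_apply, h0]
      · simp only [Pi.add_apply, hsucc, htb]
    set C1 : ℝ → ℝ≥0∞ := fun s => ENNReal.ofReal (rexp (b 0 * s / v - (b 0)^2 / (2*(v:ℝ)))) with hC1
    set C2 : (Fin n → ℝ) → ℝ≥0∞ := fun y =>
      ENNReal.ofReal (rexp ((∑ j, tb j * y j) / v - (∑ j, (tb j)^2) / (2*(v:ℝ)))) with hC2
    set Cf : (Fin (n+1) → ℝ) → ℝ≥0∞ := fun ε =>
      ENNReal.ofReal (rexp ((∑ i, b i * ε i) / v - (∑ i, (b i)^2) / (2*(v:ℝ)))) with hCf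
    have hC2m : Measurable C2 := Measurable.ennreal_ofReal <| Measurable.exp <|
      ((Finset.measurable_sum _ fun j _ => by fun_prop).div_const _).sub
        measurable_const
    have hCfm : Measurable Cf := Measurable.ennreal_ofReal <| Measurable.exp <|
      ((Finset.measurable_sum _ fun i _ => by fun_prop).div_const _).sub
        measurable_const
    have hmain : Measurable fun q : ℝ × (Fin n → ℝ) => f (e.symm q) := hf.comp e.symm.measurable
    have h1 : Measurable fun ε : Fin (n+1) → ℝ => f (b + ε) := by
      exact hf.comp (measurable_const_add b)
    have ham : AEMeasurable (fun q : ℝ × (Fin n → ℝ) => f (b + e.symm q)) (N.prod πn) := by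
      exact (h1.comp e.symm.measurable).aemeasurable
    have key : ∀ s : ℝ, ∫⁻ y, f (b + e.symm (s, y)) ∂πn
        = (fun t => ∫⁻ y, f (e.symm (t, y)) * C2 y ∂πn) (b 0 + s) := by
      intro s
      simp only []
      have := ih tb (fun y => f (e.symm (b 0 + s, y)))
        (by exact hf.comp (e.symm.measurable.comp measurable_prodMk_left))
      simp_rw [hadd s]
      exact this
    have houter : Measurable fun t : ℝ => ∫⁻ y, f (e.symm (t, y)) * C2 y ∂πn := by
      apply Measurable.lintegral_prod_right
      exact hmain.mul (hC2m.comp measurable_snd)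
    have ham2 : AEMeasurable (fun q : ℝ × (Fin n → ℝ) => f (e.symm q) * Cf (e.symm q))
        (N.prod πn) := by
      exact (hmain.mul (hCfm.comp e.symm.measurable)).aemeasurable
    calc ∫⁻ ε, f (b + ε) ∂(Measure.pi fun _ : Fin (n+1) => gaussianReal 0 v)
        = ∫⁻ q, f (b + e.symm q) ∂(N.prod πn) := by
          exact (hmp.lintegral_comp h1).symm
      _ = ∫⁻ s, ∫⁻ y, f (b + e.symm (s, y)) ∂πn ∂N := lintegral_prod _ ham
      _ = ∫⁻ s, (fun t => ∫⁻ y, f (e.symm (t, y)) * C2 y ∂πn) (b 0 + s) ∂N :=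
          lintegral_congr key
      _ = ∫⁻ s, (∫⁻ y, f (e.symm (s, y)) * C2 y ∂πn) * C1 s ∂N := by
          rw [SSB.shift1 v hv (b 0) _ houter]
      _ = ∫⁻ s, ∫⁻ y, f (e.symm (s, y)) * C2 y * C1 s ∂πn ∂N := by
          refine lintegral_congr fun s => ?_
          have hFy : Measurable fun y : Fin n → ℝ => f (e.symm (s, y)) * C2 y := by
            exact (hmain.comp measurable_prodMk_left).mul hC2m
          exact (lintegral_mul_const (C1 s) hFy).symm
      _ = ∫⁻ s, ∫⁻ y, f (e.symm (s, y)) * Cf (e.symm (s, y)) ∂πn ∂N := by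
          refine lintegral_congr fun s => lintegral_congr fun y => ?_
          rw [mul_assoc]
          congr 1
          rw [hC1, hC2, hCf, ← ENNReal.ofReal_mul (Real.exp_nonneg _), ← Real.exp_add]
          congr 1
          have hs1 : ∑ i, b i * e.symm (s, y) i = b 0 * s + ∑ j, tb j * y j := by
            rw [Fin.sum_univ_succ]
            simp [h0, hsucc, htb]
          have hs2 : (∑ i, (b i)^2 : ℝ) = (b 0)^2 + ∑ j, (tb j)^2 := by
            rw [Fin.sum_univ_succ]
          rw [hs1, hs2]
          ring
      _ = ∫⁻ q, f (e.symm q) * Cf (e.symm q) ∂(N.prod πn) := (lintegral_prod _ ham2).symm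
      _ = ∫⁻ ε, f ε * Cf ε ∂(Measure.pi fun _ : Fin (n+1) => gaussianReal 0 v) := by
          exact hmp.lintegral_comp (hf.mul hCfm)

theorem smoothing_upper_bound (d : ℕ) (σ : ℝ) (hσ : 0 < σ)
    (h : EuclideanSpace ℝ (Fin d) → ℝ) (hm : Measurable h)
    (hb : ∀ z, h z ∈ Set.Icc (0:ℝ) 1)
    (x δ : EuclideanSpace ℝ (Fin d))
    (hx : (∫ ε, h (x + ε) ∂(isoGaussian d σ)) ∈ Set.Ioo (0:ℝ) 1) :
    (∫ ε, h ((x + δ) + ε) ∂(isoGaussian d σ)) ≤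
      stdGaussCDF (stdGaussCDFInv (∫ ε, h (x + ε) ∂(isoGaussian d σ)) + ‖δ‖ / σ) := by
  classical
  set v : ℝ≥0 := ⟨σ^2, sq_nonneg σ⟩ with hvdef
  have hvr : (v:ℝ) = σ^2 := rfl
  have hv0 : (0:ℝ) < v := by rw [hvr]; positivity
  have hv : v ≠ 0 := by
    intro hcon
    have : (v:ℝ) = 0 := by rw [hcon]; rfl
    linarith
  set PP : Measure (Fin d → ℝ) := Measure.pi fun _ : Fin d => gaussianReal 0 v with hPPdef
  set e := (MeasurableEquiv.toLp 2 (Fin d → ℝ)).symm with hedef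
  set g : (Fin d → ℝ) → ℝ := fun ε' => h (x + e.symm ε') with hgdef
  have hgm : Measurable g := by
    exact hm.comp ((measurable_const_add x).comp e.symm.measurable)
  have hg0 : ∀ ε', 0 ≤ g ε' := fun ε' => (hb _).1
  have hg1 : ∀ ε', g ε' ≤ 1 := fun ε' => (hb _).2
  set b : Fin d → ℝ := fun i => δ i with hbdef
  have hE : ∀ ε' : Fin d → ℝ, x + δ + e.symm ε' = x + e.symm (b + ε') := by
    intro ε'
    apply WithLp.ofLp_injective 2
    funext i
    show (x i + δ i) + ε' i = x i + (δ i + ε' i)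
    ring
  have hiso : isoGaussian d σ = Measure.map e.symm PP := rfl
  have hint1 : (∫ ε, h (x + ε) ∂(isoGaussian d σ)) = ∫ ε', g ε' ∂PP := by
    rw [hiso, MeasureTheory.integral_map_equiv]
  have hint2 : (∫ ε, h ((x + δ) + ε) ∂(isoGaussian d σ)) = ∫ ε', g (b + ε') ∂PP := by
    rw [hiso, MeasureTheory.integral_map_equiv]
    refine integral_congr_ae (Filter.Eventually.of_forall fun ε' => ?_)
    show h (x + δ + e.symm ε') = h (x + e.symm (b + ε'))
    rw [hE]
  set p : ℝ := ∫ ε', g ε' ∂PP with hpdef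
  have hp : p ∈ Set.Ioo (0:ℝ) 1 := hint1 ▸ hx
  rw [hint1, hint2]
  set G : (Fin d → ℝ) → ℝ≥0∞ := fun ε' => ENNReal.ofReal (g ε') with hGdef
  have hGm : Measurable G := hgm.ennreal_ofReal
  have hGle : ∀ ε', G ε' ≤ 1 := fun ε' => ENNReal.ofReal_le_one.2 (hg1 ε')
  have hintg : ∀ b' : Fin d → ℝ, (∫ ε', g (b' + ε') ∂PP) = (∫⁻ ε', G (b' + ε') ∂PP).toReal := by
    intro b'
    rw [integral_eq_lintegral_of_nonneg_ae (Filter.Eventually.of_forall fun ε' => hg0 _)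
      (by exact (hgm.comp (measurable_const_add b')).aestronglyMeasurable)]
  have hGint : ∫⁻ ε', G ε' ∂PP ≤ 1 := by
    calc ∫⁻ ε', G ε' ∂PP ≤ ∫⁻ _, 1 ∂PP := lintegral_mono hGle
      _ = 1 := by simp
  have hofp : ENNReal.ofReal p = ∫⁻ ε', G ε' ∂PP := by
    have h0 : (∫ ε', g ε' ∂PP) = (∫⁻ ε', G ε' ∂PP).toReal := by
      rw [integral_eq_lintegral_of_nonneg_ae (Filter.Eventually.of_forall fun ε' => hg0 _)
        hgm.aestronglyMeasurable]
    rw [hpdef, h0, ENNReal.ofReal_toReal (lt_of_le_of_lt hGint ENNReal.one_lt_top).ne]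
  by_cases hδ : δ = 0
  · subst hδ
    have hb0 : b = 0 := by funext i; rfl
    have hgb : (fun ε' => g (b + ε')) = fun ε' => g ε' := by
      funext ε'
      rw [hb0, zero_add]
    rw [hgb, ← hpdef, norm_zero, zero_div, add_zero, SSB.stdGaussCDF_invFun hp]
  have hr : 0 < ‖δ‖ := norm_pos_iff.2 hδ
  have hr2 : (∑ i, (b i)^2 : ℝ) = ‖δ‖^2 := by
    rw [EuclideanSpace.norm_eq, Real.sq_sqrt (by positivity)]
    refine Finset.sum_congr rfl fun i _ => ?_
    rw [Real.norm_eq_abs, sq_abs]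
  set T : (Fin d → ℝ) → ℝ := fun ε' => ∑ i, b i * ε' i with hTdef
  have hTm : Measurable T := Finset.measurable_sum _ fun i _ => (measurable_pi_apply i).const_mul _
  set w : ℝ≥0 := (∑ i, (b i)^2 : ℝ).toNNReal * v with hwdef
  have hmapT : Measure.map T PP = gaussianReal 0 w := SSB.map_sum_pi v d b
  have hwr : (w:ℝ) = ‖δ‖^2 * σ^2 := by
    rw [hwdef]
    push_cast [Real.coe_toNNReal _ (by positivity : (0:ℝ) ≤ ∑ i, (b i)^2)]
    rw [hr2, hvr]
  have hw0 : (0:ℝ) < (w:ℝ) := by rw [hwr]; positivity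
  have hw : w ≠ 0 := by
    intro hcon
    have : (w:ℝ) = 0 := by rw [hcon]; rfl
    linarith
  have hsqw : Real.sqrt w = σ * ‖δ‖ := by
    rw [hwr, show ‖δ‖^2 * σ^2 = (σ * ‖δ‖)^2 by ring, Real.sqrt_sq (by positivity)]
  set c : ℝ := -(σ * ‖δ‖) * stdGaussCDFInv p with hcdef
  have hIci : ∀ c' : ℝ, PP {ε' | c' ≤ T ε'} = gaussianReal 0 w (Set.Ici c') := by
    intro c'
    rw [← hmapT, Measure.map_apply hTm measurableSet_Ici]
    rfl
  set A : Set (Fin d → ℝ) := {ε' | c ≤ T ε'} with hAdef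
  have hA : MeasurableSet A := measurableSet_le measurable_const hTm
  have hPPA : PP A = ENNReal.ofReal p := by
    rw [hAdef, hIci c, SSB.gaussianReal_Ici w hw c, hsqw, hcdef]
    rw [show -(-(σ * ‖δ‖) * stdGaussCDFInv p) / (σ * ‖δ‖) = stdGaussCDFInv p by
      field_simp]
    rw [SSB.stdGaussCDF_invFun hp]
  set Lr : (Fin d → ℝ) → ℝ := fun ε' =>
    rexp ((∑ i, b i * ε' i) / v - (∑ i, (b i)^2) / (2*(v:ℝ))) with hLrdef
  set Lof : (Fin d → ℝ) → ℝ≥0∞ := fun ε' => ENNReal.ofReal (Lr ε') with hLofdef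
  have hLofm : Measurable Lof := Measurable.ennreal_ofReal <| Measurable.exp <|
    ((Finset.measurable_sum _ fun i _ => by fun_prop).div_const _).sub
      measurable_const
  set K : ℝ := rexp (c / v - ‖δ‖^2 / (2*(v:ℝ))) with hKdef
  have hKpos : 0 < K := Real.exp_pos _
  have hLK : ∀ ε', c ≤ T ε' → K ≤ Lr ε' := by
    intro ε' hce
    rw [hKdef, hLrdef]
    apply Real.exp_le_exp.2
    rw [hr2]
    have hTe : c / (v:ℝ) ≤ (∑ i, b i * ε' i) / (v:ℝ) := by gcongr
    linarith
  have hKL : ∀ ε', T ε' ≤ c → Lr ε' ≤ K := by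
    intro ε' hce
    rw [hKdef, hLrdef]
    apply Real.exp_le_exp.2
    rw [hr2]
    have hTe : (∑ i, b i * ε' i) / (v:ℝ) ≤ c / (v:ℝ) := by gcongr
    linarith
  have hNP : ∀ ε', G ε' * Lof ε' + A.indicator (fun _ => ENNReal.ofReal K) ε'
      ≤ A.indicator Lof ε' + G ε' * ENNReal.ofReal K := by
    intro ε'
    by_cases hin : ε' ∈ A
    · rw [Set.indicator_of_mem hin, Set.indicator_of_mem hin]
      have hkl : K ≤ Lr ε' := hLK ε' hin
      rw [hGdef, hLofdef, ← ENNReal.ofReal_mul (hg0 ε'), ← ENNReal.ofReal_mul (hg0 ε'),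
        ← ENNReal.ofReal_add (mul_nonneg (hg0 ε') (Real.exp_nonneg _)) hKpos.le,
        ← ENNReal.ofReal_add (Real.exp_nonneg _) (mul_nonneg (hg0 ε') hKpos.le)]
      apply ENNReal.ofReal_le_ofReal
      nlinarith [hg1 ε', hg0 ε']
    · rw [Set.indicator_of_notMem hin, Set.indicator_of_notMem hin, zero_add, add_zero]
      have hkl : Lr ε' ≤ K := hKL ε' (le_of_not_ge hin)
      exact mul_le_mul_right (ENNReal.ofReal_le_ofReal hkl) _
  have hGLm : Measurable fun ε' => G ε' * Lof ε' := hGm.mul hLofm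
  have hILm : Measurable (A.indicator Lof) := hLofm.indicator hA
  have hmain_le : ∫⁻ ε', G ε' * Lof ε' ∂PP ≤ ∫⁻ ε', A.indicator Lof ε' ∂PP := by
    have hstep := lintegral_mono (μ := PP) hNP
    rw [lintegral_add_left hGLm, lintegral_add_left hILm,
      lintegral_indicator_const hA, lintegral_mul_const _ hGm, ← hofp, hPPA] at hstep
    have hfin : ENNReal.ofReal K * ENNReal.ofReal p ≠ ⊤ :=
      ENNReal.mul_ne_top ENNReal.ofReal_ne_top ENNReal.ofReal_ne_top
    rw [mul_comm (ENNReal.ofReal p) (ENNReal.ofReal K)] at hstep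
    exact (ENNReal.add_le_add_iff_right hfin).1 hstep
  have hsh1 : ∫⁻ ε', G (b + ε') ∂PP = ∫⁻ ε', G ε' * Lof ε' ∂PP := by
    exact SSB.pi_shift v hv d b G hGm
  set IndE : (Fin d → ℝ) → ℝ≥0∞ := A.indicator (1 : (Fin d → ℝ) → ℝ≥0∞) with hIdef
  have hIm : Measurable IndE := measurable_one.indicator hA
  have hsh2 : ∫⁻ ε', IndE (b + ε') ∂PP = ∫⁻ ε', IndE ε' * Lof ε' ∂PP := by
    exact SSB.pi_shift v hv d b IndE hIm
  have hIL : ∀ ε', IndE ε' * Lof ε' = A.indicator Lof ε' := by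
    intro ε'
    by_cases hin : ε' ∈ A
    · rw [hIdef, Set.indicator_of_mem hin, Set.indicator_of_mem hin]
      simp
    · rw [hIdef, Set.indicator_of_notMem hin, Set.indicator_of_notMem hin]
      simp
  have hTB : ∀ ε' : Fin d → ℝ, T (b + ε') = ‖δ‖^2 + T ε' := by
    intro ε'
    rw [hTdef]
    calc (∑ i, b i * (b + ε') i : ℝ) = ∑ i, ((b i)^2 + b i * ε' i) := by
          refine Finset.sum_congr rfl fun i _ => ?_
          show b i * (b i + ε' i) = _
          ring
      _ = (∑ i, (b i)^2) + ∑ i, b i * ε' i := Finset.sum_add_distrib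
      _ = ‖δ‖^2 + ∑ i, b i * ε' i := by rw [hr2]
  have hBset : MeasurableSet {ε' : Fin d → ℝ | c - ‖δ‖^2 ≤ T ε'} :=
    measurableSet_le measurable_const hTm
  have hind_shift : ∀ ε', IndE (b + ε')
      = ({ε' : Fin d → ℝ | c - ‖δ‖^2 ≤ T ε'}).indicator (1 : (Fin d → ℝ) → ℝ≥0∞) ε' := by
    intro ε'
    by_cases hmem : ε' ∈ {ε' : Fin d → ℝ | c - ‖δ‖^2 ≤ T ε'}
    · have hmem' : c - ‖δ‖^2 ≤ T ε' := hmem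
      have hmem2 : b + ε' ∈ A := by
        rw [hAdef]
        show c ≤ T (b + ε')
        rw [hTB]
        linarith
      rw [hIdef, Set.indicator_of_mem hmem2, Set.indicator_of_mem hmem]
      rfl
    · have hmem' : ¬ (c - ‖δ‖^2 ≤ T ε') := hmem
      have hmem2 : b + ε' ∉ A := by
        rw [hAdef]
        intro hcon
        have : c ≤ T (b + ε') := hcon
        rw [hTB] at this
        exact hmem' (by linarith)
      rw [hIdef, Set.indicator_of_notMem hmem2, Set.indicator_of_notMem hmem]
  have hval : ∫⁻ ε', IndE (b + ε') ∂PP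
      = ENNReal.ofReal (stdGaussCDF (stdGaussCDFInv p + ‖δ‖ / σ)) := by
    calc ∫⁻ ε', IndE (b + ε') ∂PP
        = ∫⁻ ε', ({ε' : Fin d → ℝ | c - ‖δ‖^2 ≤ T ε'}).indicator (1 : (Fin d → ℝ) → ℝ≥0∞) ε' ∂PP := by
          exact lintegral_congr hind_shift
      _ = PP {ε' : Fin d → ℝ | c - ‖δ‖^2 ≤ T ε'} := by
          rw [lintegral_indicator_one hBset]
      _ = gaussianReal 0 w (Set.Ici (c - ‖δ‖^2)) := hIci _
      _ = ENNReal.ofReal (stdGaussCDF (-(c - ‖δ‖^2) / Real.sqrt w)) :=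
          SSB.gaussianReal_Ici w hw _
      _ = ENNReal.ofReal (stdGaussCDF (stdGaussCDFInv p + ‖δ‖ / σ)) := by
          congr 1
          rw [hsqw, hcdef]
          congr 1
          have hσ' : σ ≠ 0 := ne_of_gt hσ
          have hd' : ‖δ‖ ≠ 0 := ne_of_gt hr
          field_simp
          ring
  rw [hintg b]
  refine ENNReal.toReal_le_of_le_ofReal ENNReal.toReal_nonneg ?_
  calc ∫⁻ ε', G (b + ε') ∂PP = ∫⁻ ε', G ε' * Lof ε' ∂PP := hsh1
    _ ≤ ∫⁻ ε', A.indicator Lof ε' ∂PP := hmain_le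
    _ = ∫⁻ ε', IndE ε' * Lof ε' ∂PP := (lintegral_congr hIL).symm
    _ = ∫⁻ ε', IndE (b + ε') ∂PP := hsh2.symm
    _ = ENNReal.ofReal (stdGaussCDF (stdGaussCDFInv p + ‖δ‖ / σ)) := hval
end

section
/- For measurable h : ℝ^d → [0,1], σ > 0, and ĥ(x) = E_{ε ~ N(0,σ²I)}[h(x+ε)], if ĥ(x) > 1/2 and 0 < ĥ(x) < 1, then ĥ(x+δ) > 1/2 for all δ with ‖δ‖₂ < σ·Φ⁻¹(ĥ(x)). -/
set_option maxHeartbeats 1000000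

open MeasureTheory ProbabilityTheory Real Set
open scoped RealInnerProductSpace NNReal ENNReal

lemma SC.lintegral_pi_prod {n : ℕ} (f : Fin n → ℝ → ℝ≥0∞) (hf : ∀ i, Measurable (f i)) :
    ∫⁻ x : Fin n → ℝ, ∏ i, f i (x i) ∂(Measure.pi fun _ => (volume : Measure ℝ))
      = ∏ i, ∫⁻ y, f i y := by
  induction n with
  | zero => simp [Measure.pi_of_empty (β := fun _ : Fin 0 => ℝ)]
  | succ n ih =>
      have hmp := (measurePreserving_piFinSuccAbove (fun _ : Fin (n+1) => (volume : Measure ℝ)) 0).symm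
      rw [← hmp.lintegral_comp (f := fun x => ∏ i, f i (x i))
        (Finset.measurable_prod _ fun i _ => (hf i).comp (measurable_pi_apply i))]
      simp_rw [MeasurableEquiv.piFinSuccAbove_symm_apply, Fin.insertNthEquiv,
        Fin.prod_univ_succ, Fin.insertNth_zero]
      simp only [Fin.zero_succAbove, Function.comp_def, Fin.cons_zero, Fin.cons_succ,
        Equiv.coe_fn_mk, cast_eq]
      rw [lintegral_prod_mul (f := f 0) (g := fun y : Fin n → ℝ => ∏ i, f i.succ (y i))
        (hf 0).aemeasurable
        (Finset.measurable_prod _ fun i _ => (hf i.succ).comp (measurable_pi_apply i)).aemeasurable]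
      rw [ih (fun i => f i.succ) (fun i => hf i.succ)]

lemma SC.map_equiv_withDensity {α β : Type*} [MeasurableSpace α] [MeasurableSpace β]
    (e : α ≃ᵐ β) (μ : Measure α) (ρ : β → ℝ≥0∞) (hρ : Measurable ρ) :
    Measure.map e (μ.withDensity (ρ ∘ e)) = (Measure.map e μ).withDensity ρ := by
  ext s hs
  rw [Measure.map_apply e.measurable hs, withDensity_apply _ (e.measurable hs),
    withDensity_apply _ hs, setLIntegral_map hs hρ e.measurable]
  rfl

lemma SC.map_eval_pi {n : ℕ} (ν : Measure ℝ) [IsProbabilityMeasure ν] (i : Fin n) :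
    Measure.map (fun x : Fin n → ℝ => x i) (Measure.pi fun _ => ν) = ν := by
  ext s hs
  rw [Measure.map_apply (measurable_pi_apply i) hs]
  classical
  rw [show (fun x : Fin n → ℝ => x i) ⁻¹' s = Set.pi Set.univ (Function.update (fun _ => Set.univ) i s) from Set.eval_preimage,
    Measure.pi_pi]
  rw [Finset.prod_eq_single i (fun j _ hj => by simp [Function.update_of_ne hj])
    (fun hi => absurd (Finset.mem_univ i) hi)]
  simp

namespace SC

noncomputable def G (d : ℕ) (σ : ℝ) (ε : EuclideanSpace ℝ (Fin d)) : ℝ :=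
  (√(2 * π * σ^2))⁻¹ ^ d * rexp (-‖ε‖^2 / (2 * σ^2))

lemma G_nonneg (d : ℕ) (σ : ℝ) (ε : EuclideanSpace ℝ (Fin d)) : 0 ≤ G d σ ε := by
  unfold G; positivity

lemma G_continuous (d : ℕ) (σ : ℝ) : Continuous (G d σ) :=
  continuous_const.mul (Real.continuous_exp.comp ((continuous_norm.pow 2).neg.div_const _))

lemma norm_sq_eq (d : ℕ) (ε : EuclideanSpace ℝ (Fin d)) : ‖ε‖^2 = ∑ i, (ε i)^2 := by
  rw [EuclideanSpace.norm_eq, Real.sq_sqrt (by positivity)]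
  simp [Real.norm_eq_abs, sq_abs]

lemma prod_pdf (d : ℕ) (σ : ℝ) (ε : EuclideanSpace ℝ (Fin d)) :
    ∏ i, gaussianPDFReal 0 ⟨σ^2, sq_nonneg σ⟩ (ε i) = G d σ ε := by
  unfold G gaussianPDFReal
  rw [Finset.prod_mul_distrib, Finset.prod_const, Finset.card_univ, Fintype.card_fin,
    ← Real.exp_sum, norm_sq_eq]
  push_cast
  congr 1
  rw [← Finset.sum_div, ← Finset.sum_neg_distrib]
  congr 1
  · congr 1
    exact Finset.sum_congr rfl fun i _ => by ring

lemma vv_ne (σ : ℝ) (hσ : 0 < σ) : (⟨σ^2, sq_nonneg σ⟩ : ℝ≥0) ≠ 0 := by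
  intro h
  have h : σ^2 = 0 := congrArg Subtype.val h
  nlinarith

lemma pi_gaussian_eq (d : ℕ) (σ : ℝ) (hσ : 0 < σ) :
    (Measure.pi fun _ : Fin d => gaussianReal 0 ⟨σ^2, sq_nonneg σ⟩)
      = (Measure.pi fun _ : Fin d => (volume : Measure ℝ)).withDensity
          (fun x => ENNReal.ofReal (∏ i, gaussianPDFReal 0 ⟨σ^2, sq_nonneg σ⟩ (x i))) := by
  classical
  set v : ℝ≥0 := ⟨σ^2, sq_nonneg σ⟩ with hv
  have hvne : v ≠ 0 := vv_ne σ hσ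
  refine Measure.pi_eq fun s hs => ?_
  rw [withDensity_apply _ (MeasurableSet.univ_pi hs), ← lintegral_indicator (MeasurableSet.univ_pi hs)]
  have hpt : ∀ x : Fin d → ℝ,
      (Set.univ.pi s).indicator (fun x => ENNReal.ofReal (∏ i, gaussianPDFReal 0 v (x i))) x
        = ∏ i, (s i).indicator (gaussianPDF 0 v) (x i) := by
    intro x
    by_cases hx : x ∈ Set.univ.pi s
    · rw [Set.indicator_of_mem hx,
        ENNReal.ofReal_prod_of_nonneg (fun i _ => gaussianPDFReal_nonneg 0 v (x i))]
      exact Finset.prod_congr rfl fun i _ => by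
        rw [Set.indicator_of_mem (hx i (Set.mem_univ i))]; rfl
    · rw [Set.indicator_of_notMem hx]
      rw [Set.mem_univ_pi] at hx
      push_neg at hx
      obtain ⟨i, hi⟩ := hx
      exact (Finset.prod_eq_zero (Finset.mem_univ i) (Set.indicator_of_notMem hi _)).symm
  simp_rw [hpt]
  rw [SC.lintegral_pi_prod _ (fun i => (measurable_gaussianPDF 0 v).indicator (hs i))]
  exact Finset.prod_congr rfl fun i _ => by
    rw [lintegral_indicator (hs i), ← gaussianReal_apply 0 hvne (s i)]

lemma isoGaussian_eq (d : ℕ) (σ : ℝ) (hσ : 0 < σ) :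
    isoGaussian d σ = (volume : Measure (EuclideanSpace ℝ (Fin d))).withDensity
      (fun ε => ENNReal.ofReal (G d σ ε)) := by
  rw [isoGaussian, pi_gaussian_eq d σ hσ]
  have hfeq : (fun x : Fin d → ℝ => ENNReal.ofReal (∏ i, gaussianPDFReal 0 ⟨σ^2, sq_nonneg σ⟩ (x i)))
      = (fun ε => ENNReal.ofReal (G d σ ε)) ∘ (MeasurableEquiv.toLp 2 (Fin d → ℝ)) := by
    funext x
    simp only [Function.comp_apply]
    congr 1
    rw [← prod_pdf d σ ((MeasurableEquiv.toLp 2 (Fin d → ℝ)) x)]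
    rfl
  rw [hfeq, SC.map_equiv_withDensity _ _ _ ((G_continuous d σ).measurable.ennreal_ofReal),
    ← MeasureTheory.volume_pi,
    MeasurableEquiv.coe_toLp, (PiLp.volume_preserving_toLp (Fin d)).map_eq]

lemma G_sub (d : ℕ) (σ : ℝ) (hσ : 0 < σ) (δ ε : EuclideanSpace ℝ (Fin d)) :
    G d σ (ε - δ) = G d σ ε * rexp ((⟪δ, ε⟫ - ‖δ‖^2/2)/σ^2) := by
  unfold G
  have key : rexp (-‖ε - δ‖ ^ 2 / (2 * σ ^ 2))
      = rexp (-‖ε‖ ^ 2 / (2 * σ ^ 2)) * rexp ((⟪δ, ε⟫ - ‖δ‖ ^ 2 / 2) / σ ^ 2) := by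
    rw [← Real.exp_add]
    congr 1
    rw [@norm_sub_sq_real, real_inner_comm]
    field_simp
    ring
  rw [key, mul_assoc ((√(2 * π * σ^2))⁻¹ ^ d)]

lemma lintegral_shift (d : ℕ) (σ : ℝ) (hσ : 0 < σ) (F : EuclideanSpace ℝ (Fin d) → ℝ≥0∞)
    (hF : Measurable F) (y : EuclideanSpace ℝ (Fin d)) :
    ∫⁻ ε, F (y + ε) ∂(isoGaussian d σ)
      = ∫⁻ ε, F ε * ENNReal.ofReal (G d σ (ε - y)) ∂(volume : Measure (EuclideanSpace ℝ (Fin d))) := by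
  rw [isoGaussian_eq d σ hσ,
    lintegral_withDensity_eq_lintegral_mul _ ((G_continuous d σ).measurable.ennreal_ofReal)
      (show Measurable (fun ε => F (y + ε)) from hF.comp (measurable_const_add y))]
  set H : EuclideanSpace ℝ (Fin d) → ℝ≥0∞ := fun ε => F ε * ENNReal.ofReal (G d σ (ε - y)) with hH
  calc ∫⁻ ε, (ENNReal.ofReal (G d σ ε)) * F (y + ε) ∂volume
      = ∫⁻ ε, H (y + ε) ∂volume := by
        congr 1; funext ε; rw [hH]; simp only []; rw [add_sub_cancel_left, mul_comm]
    _ = _ := lintegral_add_left_eq_self H y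

lemma map_isometry (d : ℕ) (σ : ℝ) (hσ : 0 < σ)
    (L : EuclideanSpace ℝ (Fin d) ≃ₗᵢ[ℝ] EuclideanSpace ℝ (Fin d)) :
    Measure.map L (isoGaussian d σ) = isoGaussian d σ := by
  rw [isoGaussian_eq d σ hσ]
  have hcomp : (fun ε => ENNReal.ofReal (G d σ ε))
      = (fun ε => ENNReal.ofReal (G d σ ε)) ∘ ⇑L := by
    funext ε
    simp only [Function.comp_apply]
    unfold G
    rw [L.norm_map]
  conv_lhs => rw [hcomp]
  have := SC.map_equiv_withDensity (L.toHomeomorph.toMeasurableEquiv) volume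
    (fun ε => ENNReal.ofReal (G d σ ε)) ((G_continuous d σ).measurable.ennreal_ofReal)
  simp only [Homeomorph.toMeasurableEquiv_coe, LinearIsometryEquiv.coe_toHomeomorph] at this
  rw [this, L.measurePreserving.map_eq]

lemma map_inner (d : ℕ) (σ : ℝ) (hσ : 0 < σ) (u : EuclideanSpace ℝ (Fin d)) (hu : ‖u‖ = 1) :
    Measure.map (fun ε => ⟪u, ε⟫) (isoGaussian d σ) = gaussianReal 0 ⟨σ^2, sq_nonneg σ⟩ := by
  have hd : 0 < d := by
    by_contra hd
    push_neg at hd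
    interval_cases d
    · have : u = 0 := Subsingleton.elim u 0
      rw [this, norm_zero] at hu; norm_num at hu
  -- orthonormal basis with b i₀ = u
  obtain ⟨b, hb⟩ := Orthonormal.exists_orthonormalBasis_extension_of_card_eq
    (𝕜 := ℝ) (by simp [finrank_euclideanSpace_fin])
    (v := fun _ : Fin d => u) (s := {⟨0, hd⟩})
    (by
      constructor
      · intro i; simpa using hu
      · intro i j hij
        exfalso
        exact hij (Subtype.ext (by
          have hi := i.2; have hj := j.2
          simp only [Set.mem_singleton_iff] at hi hj
          rw [hi, hj])))
  have hbu : b ⟨0, hd⟩ = u := hb _ rfl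
  have hrepr : (fun ε : EuclideanSpace ℝ (Fin d) => ⟪u, ε⟫)
      = (fun x : EuclideanSpace ℝ (Fin d) => x ⟨0, hd⟩) ∘ ⇑b.repr := by
    funext ε
    simp only [Function.comp_apply]
    rw [b.repr_apply_apply, hbu]
  rw [hrepr, ← Measure.map_map (by
      exact (measurable_pi_apply _).comp (MeasurableEquiv.toLp 2 (Fin d → ℝ)).symm.measurable)
      b.repr.continuous.measurable]
  rw [show Measure.map (⇑b.repr) (isoGaussian d σ) = isoGaussian d σ from
    map_isometry d σ hσ b.repr]
  -- now marginal
  rw [isoGaussian, Measure.map_map (by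
      exact (measurable_pi_apply _).comp (MeasurableEquiv.toLp 2 (Fin d → ℝ)).symm.measurable)
      (MeasurableEquiv.toLp 2 (Fin d → ℝ)).measurable]
  have hcomp2 : ((fun x : EuclideanSpace ℝ (Fin d) => x ⟨0, hd⟩)
      ∘ ⇑(MeasurableEquiv.toLp 2 (Fin d → ℝ)))
      = fun x : Fin d → ℝ => x ⟨0, hd⟩ := rfl
  rw [hcomp2]; exact @SC.map_eval_pi _ _ (instIsProbabilityMeasureGaussianReal 0 ⟨σ^2, sq_nonneg σ⟩) _

lemma stdGaussCDF_strictMono : StrictMono stdGaussCDF := by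
  intro a b hab
  have hpos : gaussianReal 0 1 (Ioc a b) ≠ 0 := by
    intro h0
    have := (gaussianReal_absolutelyContinuous' 0 one_ne_zero) h0
    rw [Real.volume_Ioc] at this
    simp only [ENNReal.ofReal_eq_zero, sub_nonpos] at this
    exact absurd this (not_le.mpr hab)
  have hsplit : gaussianReal 0 1 (Set.Iic b)
      = gaussianReal 0 1 (Set.Iic a) + gaussianReal 0 1 (Set.Ioc a b) := by
    rw [← measure_union (Set.Iic_disjoint_Ioc le_rfl) measurableSet_Ioc,
      Set.Iic_union_Ioc_eq_Iic hab.le]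
  unfold stdGaussCDF
  rw [hsplit, ENNReal.toReal_add (measure_ne_top _ _) (measure_ne_top _ _)]
  have : 0 < (gaussianReal 0 1 (Set.Ioc a b)).toReal :=
    ENNReal.toReal_pos hpos (measure_ne_top _ _)
  linarith

lemma gaussianReal_singleton (c : ℝ) : gaussianReal 0 1 ({c} : Set ℝ) = 0 :=
  (gaussianReal_absolutelyContinuous 0 one_ne_zero) (Real.volume_singleton)

lemma stdGaussCDF_zero : stdGaussCDF 0 = 1/2 := by
  have hmap : (gaussianReal 0 1).map (fun x : ℝ => (-1 : ℝ) * x) = gaussianReal 0 1 := by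
    rw [gaussianReal_map_const_mul (-1 : ℝ)]
    norm_num
  have hIci : gaussianReal 0 1 (Set.Iic (0:ℝ)) = gaussianReal 0 1 (Set.Ici (0:ℝ)) := by
    conv_rhs => rw [← hmap]
    rw [Measure.map_apply (measurable_const_mul _) measurableSet_Ici]
    congr 1
    ext z
    simp only [Set.mem_preimage, Set.mem_Ici, Set.mem_Iic]
    constructor <;> intro hz <;> nlinarith
  have huniv : gaussianReal 0 1 (Set.Iic (0:ℝ)) + gaussianReal 0 1 (Set.Ici (0:ℝ))
      = 1 + gaussianReal 0 1 ({0} : Set ℝ) := by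
    rw [← measure_union_add_inter _ measurableSet_Ici, Set.Iic_union_Ici,
      Set.Iic_inter_Ici, Set.Icc_self, measure_univ]
  rw [gaussianReal_singleton, add_zero, ← hIci] at huniv
  unfold stdGaussCDF
  have := congrArg ENNReal.toReal huniv
  rw [ENNReal.toReal_add (measure_ne_top _ _) (measure_ne_top _ _), ENNReal.toReal_one] at this
  linarith

lemma gaussianPDF_le_one (x : ℝ) : gaussianPDF 0 1 x ≤ 1 := by
  unfold gaussianPDF gaussianPDFReal
  rw [show (1:ℝ≥0∞) = ENNReal.ofReal 1 by simp]
  apply ENNReal.ofReal_le_ofReal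
  have h1 : (√(2 * π * (1:ℝ≥0)))⁻¹ ≤ 1 := by
    rw [inv_le_one_iff₀]
    right
    rw [show ((1:ℝ≥0):ℝ) = 1 by simp, mul_one]
    nlinarith [Real.sq_sqrt (by positivity : (0:ℝ) ≤ 2 * π), Real.sqrt_nonneg (2*π), Real.pi_gt_three]
  have h2 : rexp (-(x - 0)^2 / (2 * (1:ℝ≥0))) ≤ 1 := by
    rw [Real.exp_le_one_iff]
    have : (0:ℝ) ≤ (x - 0)^2 := sq_nonneg _
    have h2v : (0:ℝ) < 2 * (1:ℝ≥0) := by norm_num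
    apply div_nonpos_of_nonpos_of_nonneg <;> nlinarith
  calc (√(2 * π * (1:ℝ≥0)))⁻¹ * rexp (-(x - 0)^2 / (2 * (1:ℝ≥0)))
      ≤ 1 * 1 := by
        apply mul_le_mul h1 h2 (Real.exp_nonneg _) zero_le_one
    _ = 1 := by norm_num

lemma stdGaussCDF_lip {a b : ℝ} (hab : a ≤ b) : stdGaussCDF b - stdGaussCDF a ≤ b - a := by
  have hsplit : gaussianReal 0 1 (Set.Iic b)
      = gaussianReal 0 1 (Set.Iic a) + gaussianReal 0 1 (Set.Ioc a b) := by
    rw [← measure_union (Set.Iic_disjoint_Ioc le_rfl) measurableSet_Ioc,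
      Set.Iic_union_Ioc_eq_Iic hab]
  have hbound : gaussianReal 0 1 (Set.Ioc a b) ≤ ENNReal.ofReal (b - a) := by
    rw [gaussianReal_apply 0 one_ne_zero, ← Real.volume_Ioc]
    calc ∫⁻ x in Set.Ioc a b, gaussianPDF 0 1 x ∂volume
        ≤ ∫⁻ _ in Set.Ioc a b, 1 ∂volume := setLIntegral_mono measurable_const
          (fun x _ => gaussianPDF_le_one x)
      _ = volume (Set.Ioc a b) := by rw [setLIntegral_const, one_mul]
  unfold stdGaussCDF
  rw [hsplit, ENNReal.toReal_add (measure_ne_top _ _) (measure_ne_top _ _)]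
  have := ENNReal.toReal_mono ENNReal.ofReal_ne_top hbound
  rw [ENNReal.toReal_ofReal (by linarith)] at this
  linarith

lemma stdGaussCDF_continuous : Continuous stdGaussCDF := by
  have : LipschitzWith 1 stdGaussCDF := by
    apply LipschitzWith.of_dist_le_mul
    intro a b
    rw [Real.dist_eq, Real.dist_eq]
    push_cast
    rw [one_mul]
    rcases le_total a b with hab | hab
    · rw [abs_sub_comm (stdGaussCDF a),
        abs_of_nonneg (by linarith [(stdGaussCDF_strictMono.monotone hab)]),
        abs_sub_comm a, abs_of_nonneg (by linarith)]
      linarith [stdGaussCDF_lip hab]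
    · rw [abs_of_nonneg (by linarith [(stdGaussCDF_strictMono.monotone hab)]),
        abs_of_nonneg (by linarith)]
      linarith [stdGaussCDF_lip hab]
  exact this.continuous

lemma stdGaussCDF_tendsto_atTop : Filter.Tendsto stdGaussCDF Filter.atTop (nhds 1) := by
  have h := tendsto_measure_Iic_atTop (gaussianReal 0 1)
  rw [measure_univ] at h
  have := (ENNReal.tendsto_toReal (by norm_num : (1:ℝ≥0∞) ≠ ⊤)).comp h
  exact this

lemma stdGaussCDF_tendsto_atBot : Filter.Tendsto stdGaussCDF Filter.atBot (nhds 0) := by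
  have hIic : ∀ x : ℝ, stdGaussCDF x = 1 - (gaussianReal 0 1 (Set.Ici x)).toReal := by
    intro x
    have hsplit : gaussianReal 0 1 (Set.Iic x) + gaussianReal 0 1 (Set.Ici x)
        = 1 + gaussianReal 0 1 ({x} : Set ℝ) := by
      rw [← measure_union_add_inter _ measurableSet_Ici, Set.Iic_union_Ici,
        Set.Iic_inter_Ici, Set.Icc_self, measure_univ]
    rw [gaussianReal_singleton, add_zero] at hsplit
    have := congrArg ENNReal.toReal hsplit
    rw [ENNReal.toReal_add (measure_ne_top _ _) (measure_ne_top _ _), ENNReal.toReal_one] at this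
    unfold stdGaussCDF
    linarith
  rw [show stdGaussCDF = fun x => 1 - (gaussianReal 0 1 (Set.Ici x)).toReal from funext hIic]
  have h := tendsto_measure_Ici_atBot (gaussianReal 0 1)
  rw [measure_univ] at h
  have h2 := (ENNReal.tendsto_toReal (by norm_num : (1:ℝ≥0∞) ≠ ⊤)).comp h
  simp only [Function.comp_def, ENNReal.toReal_one] at h2
  have := h2.const_sub (1:ℝ)
  simpa using this

lemma stdGaussCDF_inv_eq {p : ℝ} (hp : p ∈ Set.Ioo (0:ℝ) 1) :
    stdGaussCDF (stdGaussCDFInv p) = p := by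
  have hex : ∃ c, stdGaussCDF c = p := by
    obtain ⟨a, ha⟩ := (stdGaussCDF_tendsto_atBot.eventually_lt_const hp.1).exists
    obtain ⟨b, hb⟩ := (stdGaussCDF_tendsto_atTop.eventually_const_lt hp.2).exists
    have hab : a ≤ b := by
      by_contra hba
      push_neg at hba
      have := stdGaussCDF_strictMono hba
      linarith
    obtain ⟨c, _, hc⟩ := intermediate_value_Icc hab stdGaussCDF_continuous.continuousOn
      (Set.mem_Icc.mpr ⟨ha.le, hb.le⟩)
    exact ⟨c, hc⟩
  exact Function.invFun_eq hex

lemma gauss_Iic_scaled (σ : ℝ) (hσ : 0 < σ) (b : ℝ) :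
    ((gaussianReal 0 ⟨σ^2, sq_nonneg σ⟩) (Set.Iic b)).toReal = stdGaussCDF (b / σ) := by
  have hmap : (gaussianReal 0 1).map (fun x : ℝ => σ * x)
      = gaussianReal 0 ⟨σ^2, sq_nonneg σ⟩ := by
    rw [gaussianReal_map_const_mul σ]
    norm_num
    rfl
  rw [← hmap, Measure.map_apply (measurable_const_mul σ) measurableSet_Iic]
  have hpre : (fun x : ℝ => σ * x) ⁻¹' (Set.Iic b) = Set.Iic (b / σ) := by
    ext z
    simp only [Set.mem_preimage, Set.mem_Iic]
    rw [le_div_iff₀ hσ, mul_comm]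
  rw [hpre]
  rfl

lemma iso_halfspace (d : ℕ) (σ : ℝ) (hσ : 0 < σ) (u : EuclideanSpace ℝ (Fin d)) (hu : ‖u‖ = 1)
    (b : ℝ) :
    ((isoGaussian d σ) {ε | ⟪u, ε⟫ ≤ b}).toReal = stdGaussCDF (b / σ) := by
  have hmeas : Measurable (fun ε : EuclideanSpace ℝ (Fin d) => ⟪u, ε⟫) :=
    (continuous_const.inner continuous_id).measurable
  have := map_inner d σ hσ u hu
  rw [← gauss_Iic_scaled σ hσ b, ← this, Measure.map_apply hmeas measurableSet_Iic]
  rfl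

lemma iso_prob (d : ℕ) (σ : ℝ) : IsProbabilityMeasure (isoGaussian d σ) := by
  rw [isoGaussian]
  haveI : IsProbabilityMeasure (gaussianReal 0 ⟨σ^2, sq_nonneg σ⟩) := instIsProbabilityMeasureGaussianReal 0 _
  exact Measure.isProbabilityMeasure_map
    (MeasurableEquiv.toLp 2 (Fin d → ℝ)).measurable.aemeasurable

end SC

open SC in
theorem binary_smoothing_certificate (d : ℕ) (σ : ℝ) (hσ : 0 < σ)
    (h : EuclideanSpace ℝ (Fin d) → ℝ) (hm : Measurable h)
    (hb : ∀ z, h z ∈ Set.Icc (0:ℝ) 1)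
    (x : EuclideanSpace ℝ (Fin d))
    (hgt : 1 / 2 < ∫ ε, h (x + ε) ∂(isoGaussian d σ))
    (hio : (∫ ε, h (x + ε) ∂(isoGaussian d σ)) ∈ Set.Ioo (0:ℝ) 1) :
    ∀ δ : EuclideanSpace ℝ (Fin d),
      ‖δ‖ < σ * stdGaussCDFInv (∫ ε, h (x + ε) ∂(isoGaussian d σ)) →
      1 / 2 < ∫ ε, h ((x + δ) + ε) ∂(isoGaussian d σ) := by
  intro δ hδ
  by_cases hδ0 : δ = 0
  · subst hδ0
    simpa using hgt
  have hμprob : IsProbabilityMeasure (isoGaussian d σ) := iso_prob d σ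
  set μ := isoGaussian d σ with hμ
  set p : ℝ := ∫ ε, h (x + ε) ∂μ with hp
  clear_value p
  set α : ℝ := stdGaussCDFInv p with hα
  have hΦα : stdGaussCDF α = p := stdGaussCDF_inv_eq hio
  clear_value α
  have hδpos : 0 < ‖δ‖ := norm_pos_iff.mpr hδ0
  have hαpos : 0 < α := by nlinarith [norm_nonneg δ]
  set a : ℝ := σ * α with ha
  set u : EuclideanSpace ℝ (Fin d) := ‖δ‖⁻¹ • δ with hu_def
  have hu : ‖u‖ = 1 := by
    rw [hu_def, norm_smul, norm_inv, norm_norm, inv_mul_cancel₀ hδpos.ne']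
  have hδu : δ = ‖δ‖ • u := by
    rw [hu_def, smul_smul, mul_inv_cancel₀ hδpos.ne', one_smul]
  have hinnerδ : ∀ ε, ⟪δ, ε⟫ = ‖δ‖ * ⟪u, ε⟫ := by
    intro ε
    conv_lhs => rw [hδu]
    exact real_inner_smul_left u ε ‖δ‖
  have hinneruδ : ⟪u, δ⟫ = ‖δ‖ := by
    rw [hu_def, real_inner_smul_left, real_inner_self_eq_norm_sq]
    field_simp
  have htmeas : Measurable (fun ε : EuclideanSpace ℝ (Fin d) => ⟪u, ε⟫) :=
    (continuous_const.inner continuous_id).measurable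
  -- functions
  set f : EuclideanSpace ℝ (Fin d) → ℝ := fun ε => h (x + ε) with hf
  have hfm : Measurable f := hm.comp (measurable_const_add x)
  set φ : EuclideanSpace ℝ (Fin d) → ℝ≥0∞ := fun ε => ENNReal.ofReal (f ε) with hφ
  have hφm : Measurable φ := hfm.ennreal_ofReal
  set A : Set (EuclideanSpace ℝ (Fin d)) := {ε | ⟪u, ε⟫ ≤ a} with hA
  have hAm : MeasurableSet A := measurableSet_le htmeas measurable_const
  set χr : EuclideanSpace ℝ (Fin d) → ℝ := A.indicator (fun _ => (1:ℝ)) with hχr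
  set χ : EuclideanSpace ℝ (Fin d) → ℝ≥0∞ := fun ε => ENNReal.ofReal (χr ε) with hχ
  have hχm : Measurable χ := ((measurable_const.indicator hAm).ennreal_ofReal :)
  have hχeq : χ = A.indicator (fun _ => (1:ℝ≥0∞)) := by
    funext ε
    by_cases hε : ε ∈ A
    · simp [hχ, hχr, Set.indicator_of_mem hε]
    · simp [hχ, hχr, Set.indicator_of_notMem hε]
  set K : ℝ := rexp ((‖δ‖ * a - ‖δ‖^2/2)/σ^2) with hK
  set R : EuclideanSpace ℝ (Fin d) → ℝ := fun ε => rexp ((‖δ‖ * ⟪u, ε⟫ - ‖δ‖^2/2)/σ^2) with hR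
  have hGsub : ∀ ε, G d σ (ε - δ) = G d σ ε * R ε := by
    intro ε
    rw [G_sub d σ hσ δ ε, hinnerδ ε]
  -- Bochner to lintegral
  have hint : ∀ y : EuclideanSpace ℝ (Fin d),
      ∫ ε, h ((x + y) + ε) ∂μ = (∫⁻ ε, φ (y + ε) ∂μ).toReal := by
    intro y
    rw [integral_eq_lintegral_of_nonneg_ae (ae_of_all _ fun ε => (hb _).1)
      (hm.comp (measurable_const_add (x + y))).aestronglyMeasurable]
    congr 1
    apply lintegral_congr
    intro ε
    rw [hφ, hf]
    simp only []
    rw [add_assoc]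
  -- shift representations
  have hJδ : ∫⁻ ε, φ (δ + ε) ∂μ
      = ∫⁻ ε, φ ε * ENNReal.ofReal (G d σ (ε - δ)) ∂volume :=
    lintegral_shift d σ hσ φ hφm δ
  have hJ0 : ∫⁻ ε, φ ε ∂μ = ∫⁻ ε, φ ε * ENNReal.ofReal (G d σ ε) ∂volume := by
    have := lintegral_shift d σ hσ φ hφm 0
    simpa using this
  have hC0 : ∫⁻ ε, χ ε ∂μ = ∫⁻ ε, χ ε * ENNReal.ofReal (G d σ ε) ∂volume := by
    have := lintegral_shift d σ hσ χ hχm 0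
    simpa using this
  have hCδ : ∫⁻ ε, χ (δ + ε) ∂μ
      = ∫⁻ ε, χ ε * ENNReal.ofReal (G d σ (ε - δ)) ∂volume :=
    lintegral_shift d σ hσ χ hχm δ
  -- values of the indicator integrals
  have hμA : ∫⁻ ε, χ ε ∂μ = μ A := by
    rw [hχeq]
    exact lintegral_indicator_one hAm
  have hμAval : (μ A).toReal = p := by
    calc (μ A).toReal = stdGaussCDF (a / σ) := iso_halfspace d σ hσ u hu a
      _ = p := by rw [ha, mul_comm σ α, mul_div_assoc, div_self hσ.ne', mul_one, hΦα]
  have hμB : ∫⁻ ε, χ (δ + ε) ∂μ = μ {ε | ⟪u, ε⟫ ≤ a - ‖δ‖} := by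
    have hfun : (fun ε => χ (δ + ε))
        = Set.indicator {ε : EuclideanSpace ℝ (Fin d) | ⟪u, ε⟫ ≤ a - ‖δ‖}
          (fun _ => (1:ℝ≥0∞)) := by
      funext ε
      have hmem : (δ + ε ∈ A) ↔ (ε ∈ {ε | ⟪u, ε⟫ ≤ a - ‖δ‖}) := by
        simp only [hA, Set.mem_setOf_eq, inner_add_right, hinneruδ]
        constructor <;> intro h' <;> linarith
      rw [hχeq]
      by_cases hε : ε ∈ {ε | ⟪u, ε⟫ ≤ a - ‖δ‖}
      · rw [Set.indicator_of_mem (hmem.mpr hε), Set.indicator_of_mem hε]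
      · rw [Set.indicator_of_notMem (fun hc => hε (hmem.mp hc)),
          Set.indicator_of_notMem hε]
    rw [hfun]
    exact lintegral_indicator_one (measurableSet_le htmeas measurable_const)
  have hμBval : (μ {ε | ⟪u, ε⟫ ≤ a - ‖δ‖}).toReal = stdGaussCDF ((a - ‖δ‖)/σ) := by
    rw [hμ]
    exact iso_halfspace d σ hσ u hu (a - ‖δ‖)
  have hμBhalf : 1/2 < (μ {ε | ⟪u, ε ⟫ ≤ a - ‖δ‖}).toReal := by
    rw [hμBval, ← stdGaussCDF_zero]
    apply stdGaussCDF_strictMono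
    have : 0 < a - ‖δ‖ := by linarith
    positivity
  -- pointwise Neyman-Pearson inequality
  have hpoint : ∀ ε, χ ε * ENNReal.ofReal (G d σ (ε - δ))
        + ENNReal.ofReal K * (φ ε * ENNReal.ofReal (G d σ ε))
      ≤ φ ε * ENNReal.ofReal (G d σ (ε - δ))
        + ENNReal.ofReal K * (χ ε * ENNReal.ofReal (G d σ ε)) := by
    intro ε
    have hf0 : 0 ≤ f ε := (hb _).1
    have hf1 : f ε ≤ 1 := (hb _).2
    have hχr0 : 0 ≤ χr ε := Set.indicator_nonneg (fun _ _ => zero_le_one) ε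
    have hG0 : 0 ≤ G d σ ε := G_nonneg d σ ε
    have hR0 : 0 ≤ R ε := (Real.exp_pos _).le
    have hK0 : 0 ≤ K := (Real.exp_pos _).le
    have e1 : χ ε * ENNReal.ofReal (G d σ (ε - δ))
        = ENNReal.ofReal (χr ε * (G d σ ε * R ε)) := by
      rw [hGsub ε, hχ]
      exact (ENNReal.ofReal_mul hχr0).symm
    have e2 : φ ε * ENNReal.ofReal (G d σ (ε - δ))
        = ENNReal.ofReal (f ε * (G d σ ε * R ε)) := by
      rw [hGsub ε, hφ]
      exact (ENNReal.ofReal_mul hf0).symm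
    have e3 : ENNReal.ofReal K * (φ ε * ENNReal.ofReal (G d σ ε))
        = ENNReal.ofReal (K * (f ε * G d σ ε)) := by
      rw [hφ, ← ENNReal.ofReal_mul hf0, ← ENNReal.ofReal_mul hK0]
    have e4 : ENNReal.ofReal K * (χ ε * ENNReal.ofReal (G d σ ε))
        = ENNReal.ofReal (K * (χr ε * G d σ ε)) := by
      rw [hχ, ← ENNReal.ofReal_mul hχr0, ← ENNReal.ofReal_mul hK0]
    rw [e1, e2, e3, e4,
      ← ENNReal.ofReal_add (by positivity) (by positivity),
      ← ENNReal.ofReal_add (by positivity) (by positivity)]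
    apply ENNReal.ofReal_le_ofReal
    by_cases hε : ε ∈ A
    · have hRK : R ε ≤ K := by
        rw [hR, hK]
        apply Real.exp_le_exp.mpr
        apply div_le_div_of_nonneg_right _ (by positivity)
        have : ⟪u, ε⟫ ≤ a := hε
        nlinarith
      have hχr1 : χr ε = 1 := Set.indicator_of_mem hε _
      rw [hχr1]
      nlinarith [mul_nonneg (mul_nonneg (sub_nonneg.mpr hRK) (sub_nonneg.mpr hf1)) hG0]
    · have hKR : K ≤ R ε := by
        rw [hR, hK]
        apply Real.exp_le_exp.mpr
        apply div_le_div_of_nonneg_right _ (by positivity)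
        have : ¬ ⟪u, ε⟫ ≤ a := hε
        push_neg at this
        nlinarith
      have hχr0' : χr ε = 0 := Set.indicator_of_notMem hε _
      rw [hχr0']
      nlinarith [mul_nonneg (mul_nonneg hf0 hG0) (sub_nonneg.mpr hKR)]
  -- integrate the pointwise inequality
  have hGm : Measurable (fun ε : EuclideanSpace ℝ (Fin d) => ENNReal.ofReal (G d σ ε)) :=
    (G_continuous d σ).measurable.ennreal_ofReal
  have hGδm : Measurable (fun ε : EuclideanSpace ℝ (Fin d) => ENNReal.ofReal (G d σ (ε - δ))) :=
    ((G_continuous d σ).comp (continuous_id.sub continuous_const)).measurable.ennreal_ofReal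
  have hineq : ∫⁻ ε, χ ε * ENNReal.ofReal (G d σ (ε - δ)) ∂volume
        + ENNReal.ofReal K * ∫⁻ ε, φ ε * ENNReal.ofReal (G d σ ε) ∂volume
      ≤ ∫⁻ ε, φ ε * ENNReal.ofReal (G d σ (ε - δ)) ∂volume
        + ENNReal.ofReal K * ∫⁻ ε, χ ε * ENNReal.ofReal (G d σ ε) ∂volume := by
    rw [← lintegral_const_mul _ (f := fun ε => φ ε * ENNReal.ofReal (G d σ ε)) (hφm.mul hGm), ← lintegral_const_mul _ (f := fun ε => χ ε * ENNReal.ofReal (G d σ ε)) (hχm.mul hGm),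
      ← lintegral_add_left (f := fun ε => χ ε * ENNReal.ofReal (G d σ (ε - δ))) (hχm.mul hGδm), ← lintegral_add_left (f := fun ε => φ ε * ENNReal.ofReal (G d σ (ε - δ))) (hφm.mul hGδm)]
    exact lintegral_mono hpoint
  -- identify the base integrals
  have hP1 : ∫⁻ ε, φ ε ∂μ ≤ 1 := by
    calc ∫⁻ ε, φ ε ∂μ ≤ ∫⁻ _, 1 ∂μ :=
          lintegral_mono fun ε => ENNReal.ofReal_le_one.mpr (hb _).2
      _ = 1 := by simp
  have hPp : (∫⁻ ε, φ ε ∂μ).toReal = p := by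
    have := hint 0
    simp only [add_zero, zero_add] at this
    rw [hp, this]
  have hPA : ∫⁻ ε, φ ε ∂μ = μ A := by
    apply (ENNReal.toReal_eq_toReal_iff' (lt_of_le_of_lt hP1 ENNReal.one_lt_top).ne
      (measure_ne_top _ _)).mp
    rw [hPp, hμAval]
  -- conclude Cδ ≤ Iδ
  have hfinal : ∫⁻ ε, χ (δ + ε) ∂μ ≤ ∫⁻ ε, φ (δ + ε) ∂μ := by
    rw [hCδ, hJδ]
    have hKfin : ENNReal.ofReal K * ∫⁻ ε, φ ε * ENNReal.ofReal (G d σ ε) ∂volume ≠ ⊤ := by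
      apply ENNReal.mul_ne_top ENNReal.ofReal_ne_top
      rw [← hJ0]
      exact (lt_of_le_of_lt hP1 ENNReal.one_lt_top).ne
    have heqint : ∫⁻ ε, χ ε * ENNReal.ofReal (G d σ ε) ∂volume
        = ∫⁻ ε, φ ε * ENNReal.ofReal (G d σ ε) ∂volume := by
      rw [← hC0, ← hJ0, hμA, hPA]
    rw [heqint,
      add_comm (∫⁻ ε, χ ε * ENNReal.ofReal (G d σ (ε - δ)) ∂volume)
        (ENNReal.ofReal K * ∫⁻ ε, φ ε * ENNReal.ofReal (G d σ ε) ∂volume),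
      add_comm (∫⁻ ε, φ ε * ENNReal.ofReal (G d σ (ε - δ)) ∂volume)
        (ENNReal.ofReal K * ∫⁻ ε, φ ε * ENNReal.ofReal (G d σ ε) ∂volume)] at hineq
    exact (ENNReal.add_le_add_iff_left hKfin).mp hineq
  -- conclusion
  have hIδtop : ∫⁻ ε, φ (δ + ε) ∂μ ≠ ⊤ := by
    have hle1 : ∫⁻ ε, φ (δ + ε) ∂μ ≤ 1 := by
      calc ∫⁻ ε, φ (δ + ε) ∂μ ≤ ∫⁻ _, 1 ∂μ :=
            lintegral_mono fun ε => ENNReal.ofReal_le_one.mpr (hb _).2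
        _ = 1 := by simp
    exact (lt_of_le_of_lt hle1 ENNReal.one_lt_top).ne
  rw [hint δ]
  calc (1:ℝ)/2 < (μ {ε | ⟪u, ε⟫ ≤ a - ‖δ‖}).toReal := hμBhalf
    _ = (∫⁻ ε, χ (δ + ε) ∂μ).toReal := by rw [hμB]
    _ ≤ (∫⁻ ε, φ (δ + ε) ∂μ).toReal := ENNReal.toReal_mono hIδtop hfinal
end

section
/- Let h : ℝ^d → [0,1] be measurable, σ > 0, and ĥ(x) = E_{ε ~ N(0,σ²I)}[h(x+ε)]. Then ĥ is Lipschitz with Lipschitz constant at most 1/(σ√(2π)) in the Euclidean norm. -/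
open MeasureTheory ProbabilityTheory Real Set
open scoped RealInnerProductSpace NNReal ENNReal
set_option maxHeartbeats 1000000

abbrev EuclideanSpace.measurableEquiv (ι : Type*) [Fintype ι] : EuclideanSpace ℝ ι ≃ᵐ (ι → ℝ) :=
  (MeasurableEquiv.toLp 2 (ι → ℝ)).symm

lemma isoGaussian_eq' (d : ℕ) (σ : ℝ) : isoGaussian d σ =
    Measure.map (EuclideanSpace.measurableEquiv (Fin d)).symm
      (Measure.pi fun _ : Fin d => gaussianReal 0 ⟨σ^2, sq_nonneg σ⟩) := rfl

section OneD
variable {v : ℝ≥0}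

lemma vpos (hv : v ≠ 0) : (0:ℝ) < v :=
  lt_of_le_of_ne v.coe_nonneg (by exact_mod_cast hv.symm)

lemma gaussPDF_le (hv : v ≠ 0) (m t : ℝ) :
    gaussianPDFReal m v t ≤ (Real.sqrt (2 * π * v))⁻¹ := by
  have := vpos hv
  rw [gaussianPDFReal]
  have h1 : Real.exp (-(t - m) ^ 2 / (2 * v)) ≤ 1 := by
    apply Real.exp_le_one_iff.mpr
    apply div_nonpos_of_nonpos_of_nonneg (neg_nonpos.mpr (sq_nonneg _)) (by positivity)
  calc (Real.sqrt (2 * π * v))⁻¹ * Real.exp (-(t - m) ^ 2 / (2 * v))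
      ≤ (Real.sqrt (2 * π * v))⁻¹ * 1 := by
        apply mul_le_mul_of_nonneg_left h1 (by positivity)
    _ = _ := mul_one _

lemma gaussPDF_mono (hv : v ≠ 0) (m₁ m₂ t₁ t₂ : ℝ) (h : (t₂ - m₂)^2 ≤ (t₁ - m₁)^2) :
    gaussianPDFReal m₁ v t₁ ≤ gaussianPDFReal m₂ v t₂ := by
  have hv' := vpos hv
  rw [gaussianPDFReal, gaussianPDFReal]
  apply mul_le_mul_of_nonneg_left _ (by positivity)
  apply Real.exp_le_exp.mpr
  have h2 : -(t₁ - m₁)^2 ≤ -(t₂ - m₂)^2 := by linarith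
  exact (div_le_div_iff_of_pos_right (by positivity)).mpr h2

lemma oneD_shift (hv : v ≠ 0) (f : ℝ → ℝ) (hf : Measurable f)
    (hb : ∀ t, f t ∈ Set.Icc (0:ℝ) 1) (c : ℝ) (hc : 0 ≤ c) :
    (∫ t, f (c + t) ∂(gaussianReal 0 v)) - ∫ t, f t ∂(gaussianReal 0 v) ≤
      c * (Real.sqrt (2 * π * v))⁻¹ := by
  classical
  have hmap : ∫ t, f (c + t) ∂(gaussianReal 0 v) = ∫ t, f t ∂(gaussianReal c v) := by
    have h0 : Measure.map (fun x => c + x) (gaussianReal 0 v) = gaussianReal c v := by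
      rw [gaussianReal_map_const_add]; norm_num
    rw [← h0, integral_map (by fun_prop) hf.aestronglyMeasurable]
  have hdens : ∀ m : ℝ, ∫ t, f t ∂(gaussianReal m v)
      = ∫ t, gaussianPDFReal m v t * f t := by
    intro m
    rw [gaussianReal_of_var_ne_zero _ hv]
    have heq : (gaussianPDF m v) = fun t => (((gaussianPDFReal m v t).toNNReal : ℝ≥0) : ℝ≥0∞) := by
      funext t; rfl
    rw [heq, integral_withDensity_eq_integral_smul
      (measurable_gaussianPDFReal m v).real_toNNReal f]
    congr 1
    funext t
    rw [NNReal.smul_def, smul_eq_mul, Real.coe_toNNReal _ (gaussianPDFReal_nonneg _ _ _)]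
  have hint : ∀ m : ℝ, Integrable (fun t => gaussianPDFReal m v t * f t) := by
    intro m
    apply (integrable_gaussianPDFReal m v).mono
      ((measurable_gaussianPDFReal m v).mul hf).aestronglyMeasurable
    filter_upwards with t
    rw [Pi.mul_apply, norm_mul, Real.norm_eq_abs, Real.norm_eq_abs,
      abs_of_nonneg (gaussianPDFReal_nonneg _ _ _)]
    nth_rewrite 2 [← mul_one (gaussianPDFReal m v t)]
    apply mul_le_mul_of_nonneg_left _ (gaussianPDFReal_nonneg _ _ _)
    rw [abs_le]; exact ⟨by linarith [(hb t).1], (hb t).2⟩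
  rw [hmap, hdens, hdens, ← integral_sub (hint c) (hint 0)]
  have hdiff_int : Integrable (fun t => gaussianPDFReal c v t - gaussianPDFReal 0 v t) :=
    (integrable_gaussianPDFReal c v).sub (integrable_gaussianPDFReal 0 v)
  have hpt : ∀ t, gaussianPDFReal c v t * f t - gaussianPDFReal 0 v t * f t ≤
      (Set.Ici (c/2)).indicator (fun t => gaussianPDFReal c v t - gaussianPDFReal 0 v t) t := by
    intro t
    rw [← sub_mul]
    by_cases ht : t ∈ Set.Ici (c/2)
    · rw [Set.indicator_of_mem ht]
      have hle : gaussianPDFReal 0 v t ≤ gaussianPDFReal c v t := by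
        apply gaussPDF_mono hv 0 c t t
        have h2 : c/2 ≤ t := ht
        nlinarith
      nth_rewrite 2 [← mul_one (gaussianPDFReal c v t - gaussianPDFReal 0 v t)]
      rcases le_or_gt 0 (gaussianPDFReal c v t - gaussianPDFReal 0 v t) with h0 | h0
      · exact mul_le_mul_of_nonneg_left (hb t).2 h0
      · linarith
    · rw [Set.indicator_of_notMem ht]
      apply mul_nonpos_of_nonpos_of_nonneg _ (hb t).1
      rw [sub_nonpos]
      apply gaussPDF_mono hv c 0 t t
      simp only [Set.mem_Ici, not_le] at ht
      nlinarith
  have hind_int : Integrable ((Set.Ici (c/2)).indicator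
      (fun t => gaussianPDFReal c v t - gaussianPDFReal 0 v t)) :=
    hdiff_int.indicator measurableSet_Ici
  have hIci : (gaussianReal c v) (Set.Ici (c/2)) = (gaussianReal 0 v) (Set.Ici (c/2 - c)) := by
    have h0 : Measure.map (fun x => c + x) (gaussianReal 0 v) = gaussianReal c v := by
      rw [gaussianReal_map_const_add]; norm_num
    rw [← h0, Measure.map_apply (by fun_prop) measurableSet_Ici]
    congr 1
    ext t
    simp only [Set.mem_preimage, Set.mem_Ici]
    constructor <;> intro <;> linarith
  calc ∫ t, (gaussianPDFReal c v t * f t - gaussianPDFReal 0 v t * f t)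
      ≤ ∫ t, (Set.Ici (c/2)).indicator
          (fun t => gaussianPDFReal c v t - gaussianPDFReal 0 v t) t :=
        integral_mono ((hint c).sub (hint 0)) hind_int hpt
    _ = (∫ t in Set.Ici (c/2), gaussianPDFReal c v t)
        - ∫ t in Set.Ici (c/2), gaussianPDFReal 0 v t := by
        rw [integral_indicator measurableSet_Ici]
        exact integral_sub (integrable_gaussianPDFReal c v).restrict
          (integrable_gaussianPDFReal 0 v).restrict
    _ = ((gaussianReal c v) (Set.Ici (c/2))).toReal
        - ((gaussianReal 0 v) (Set.Ici (c/2))).toReal := by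
        rw [gaussianReal_apply_eq_integral _ hv, gaussianReal_apply_eq_integral _ hv,
          ENNReal.toReal_ofReal
            (setIntegral_nonneg measurableSet_Ici fun t _ => gaussianPDFReal_nonneg _ _ _),
          ENNReal.toReal_ofReal
            (setIntegral_nonneg measurableSet_Ici fun t _ => gaussianPDFReal_nonneg _ _ _)]
    _ ≤ c * (Real.sqrt (2 * π * v))⁻¹ := by
        rw [hIci]
        have hsplit : (gaussianReal 0 v) (Set.Ici (c/2 - c)) =
            (gaussianReal 0 v) (Set.Ico (c/2 - c) (c/2)) +
              (gaussianReal 0 v) (Set.Ici (c/2)) := by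
          rw [← measure_union ?_ measurableSet_Ici, Set.Ico_union_Ici_eq_Ici (by linarith)]
          exact Set.disjoint_left.mpr fun t ht ht' => absurd ht.2 (not_lt.mpr ht')
        rw [hsplit, ENNReal.toReal_add (measure_ne_top _ _) (measure_ne_top _ _),
          add_sub_cancel_right, gaussianReal_apply_eq_integral _ hv,
          ENNReal.toReal_ofReal
            (setIntegral_nonneg measurableSet_Ico fun t _ => gaussianPDFReal_nonneg _ _ _)]
        calc ∫ t in Set.Ico (c/2 - c) (c/2), gaussianPDFReal 0 v t
            ≤ ∫ _t in Set.Ico (c/2 - c) (c/2), (Real.sqrt (2*π*v))⁻¹ := by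
              apply setIntegral_mono_on (integrable_gaussianPDFReal 0 v).restrict
                ((integrableOn_const_iff).mpr (Or.inr (by rw [Real.volume_Ico]; exact ENNReal.ofReal_lt_top)))
                measurableSet_Ico (fun t _ => gaussPDF_le hv 0 t)
          _ ≤ c * (Real.sqrt (2*π*v))⁻¹ := by
              rw [setIntegral_const, Real.volume_real_Ico, smul_eq_mul,
                max_eq_left (by linarith)]
              apply mul_le_mul_of_nonneg_right (by linarith) (by positivity)
end OneD

section Multi

lemma lintegral_pi_prod {α : Type*} [MeasurableSpace α] (μ : Measure α) [SigmaFinite μ] :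
    ∀ {n : ℕ} (g : Fin n → α → ℝ≥0∞), (∀ i, Measurable (g i)) →
      ∫⁻ w, ∏ i, g i (w i) ∂(Measure.pi fun _ : Fin n => μ) = ∏ i, ∫⁻ t, g i t ∂μ := by
  intro n
  induction n with
  | zero => intro g hg; simp [Measure.pi_of_empty]
  | succ n ih =>
    intro g hg
    have hT := measurePreserving_piFinSuccAbove (fun _ : Fin (n+1) => μ) 0
    set T := MeasurableEquiv.piFinSuccAbove (fun _ : Fin (n+1) => α) 0 with hTdef
    have hmeas2 : Measurable fun z : α × (Fin n → α) => g 0 z.1 * ∏ j, g (Fin.succ j) (z.2 j) := by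
      apply Measurable.mul ((hg 0).comp measurable_fst)
      exact (Finset.measurable_prod _ fun j _ =>
        (hg _).comp ((measurable_pi_apply j).comp measurable_snd))
    have key : ∀ w : Fin (n+1) → α, ∏ i, g i (w i)
        = g 0 ((T w).1) * ∏ j, g (Fin.succ j) ((T w).2 j) := by
      intro w
      rw [Fin.prod_univ_succAbove (fun i => g i (w i)) 0]
      simp only [hTdef, MeasurableEquiv.piFinSuccAbove, Fin.succAbove_zero,
        MeasurableEquiv.coe_mk]
      rfl
    calc ∫⁻ w, ∏ i, g i (w i) ∂(Measure.pi fun _ : Fin (n+1) => μ)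
        = ∫⁻ w, g 0 ((T w).1) * ∏ j, g (Fin.succ j) ((T w).2 j)
            ∂(Measure.pi fun _ : Fin (n+1) => μ) := by
          congr 1; funext w; exact key w
      _ = ∫⁻ z, g 0 z.1 * ∏ j, g (Fin.succ j) (z.2 j)
            ∂(μ.prod (Measure.pi fun _ : Fin n => μ)) := hT.lintegral_comp hmeas2
      _ = (∫⁻ t, g 0 t ∂μ) * ∫⁻ r, ∏ j, g (Fin.succ j) (r j)
            ∂(Measure.pi fun _ : Fin n => μ) := by
          exact lintegral_prod_mul (f := g 0)
            (g := fun r : Fin n → α => ∏ j, g (Fin.succ j) (r j)) (hg 0).aemeasurable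
            (Finset.measurable_prod _ fun j _ =>
              (hg _).comp (measurable_pi_apply j)).aemeasurable
      _ = ∏ i, ∫⁻ t, g i t ∂μ := by
          rw [ih _ fun j => hg _, Fin.prod_univ_succ]

lemma MeasurableEquiv.map_withDensity' {α β : Type*} [MeasurableSpace α] [MeasurableSpace β]
    (T : α ≃ᵐ β) (ν : Measure α) (g : β → ℝ≥0∞) (hg : Measurable g) :
    Measure.map T (ν.withDensity (fun a => g (T a))) = (Measure.map T ν).withDensity g := by
  ext s hs
  rw [Measure.map_apply T.measurable hs, withDensity_apply _ (T.measurable hs),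
    withDensity_apply _ hs, setLIntegral_map hs hg T.measurable]

lemma pi_gauss_eq {v : ℝ≥0} (hv : v ≠ 0) (n : ℕ) :
    (Measure.pi fun _ : Fin n => gaussianReal 0 v) =
      (volume : Measure (Fin n → ℝ)).withDensity (fun w => ∏ i, gaussianPDF 0 v (w i)) := by
  apply Measure.pi_eq
  intro s hs
  rw [withDensity_apply _ (MeasurableSet.univ_pi hs)]
  have heq : ∫⁻ w in Set.pi Set.univ s, ∏ i, gaussianPDF 0 v (w i) ∂volume
      = ∫⁻ w, ∏ i, (s i).indicator (gaussianPDF 0 v) (w i)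
          ∂(Measure.pi fun _ : Fin n => (volume : Measure ℝ)) := by
    rw [← volume_pi, ← lintegral_indicator (MeasurableSet.univ_pi hs)]
    congr 1
    funext w
    by_cases hw : w ∈ Set.pi Set.univ s
    · rw [Set.indicator_of_mem hw]
      exact Finset.prod_congr rfl fun i _ =>
        (Set.indicator_of_mem (hw i (Set.mem_univ i)) _).symm
    · rw [Set.indicator_of_notMem hw]
      rw [Set.mem_univ_pi] at hw; push_neg at hw
      obtain ⟨i, hi⟩ := hw
      exact (Finset.prod_eq_zero (Finset.mem_univ i)
        (by rw [Set.indicator_of_notMem hi])).symm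
  rw [heq, lintegral_pi_prod volume _ fun i => (measurable_gaussianPDF 0 v).indicator (hs i)]
  exact Finset.prod_congr rfl fun i _ => by
    rw [lintegral_indicator (hs i), ← gaussianReal_apply 0 hv]

noncomputable def gaussDens (v : ℝ≥0) (d : ℕ) (z : EuclideanSpace ℝ (Fin d)) : ℝ≥0∞ :=
  ENNReal.ofReal ((Real.sqrt (2 * π * v))⁻¹ ^ d * Real.exp (-‖z‖^2 / (2 * v)))

lemma measurable_gaussDens (v : ℝ≥0) (d : ℕ) : Measurable (gaussDens v d) := by
  unfold gaussDens
  measurability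

lemma norm_sq_eq (d : ℕ) (z : EuclideanSpace ℝ (Fin d)) : ‖z‖^2 = ∑ i, (z i)^2 := by
  rw [EuclideanSpace.norm_eq, Real.sq_sqrt (Finset.sum_nonneg fun i _ => sq_nonneg _)]
  exact Finset.sum_congr rfl fun i _ => by rw [Real.norm_eq_abs, sq_abs]

lemma prod_gaussPDF {v : ℝ≥0} (n : ℕ) (w : Fin n → ℝ) :
    ∏ i, gaussianPDF 0 v (w i)
      = gaussDens v n ((EuclideanSpace.measurableEquiv (Fin n)).symm w) := by
  rw [gaussianPDF_def, ← ENNReal.ofReal_prod_of_nonneg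
    (fun i _ => gaussianPDFReal_nonneg _ _ _)]
  unfold gaussDens
  congr 1
  simp only [gaussianPDFReal]
  rw [Finset.prod_mul_distrib, Finset.prod_const, Finset.card_univ, Fintype.card_fin,
    ← Real.exp_sum]
  congr 1
  have hz : ∀ i, ((EuclideanSpace.measurableEquiv (Fin n)).symm w) i = w i := fun i => rfl
  rw [norm_sq_eq]
  simp only [hz, sub_zero]
  rw [← Finset.sum_div, ← Finset.sum_neg_distrib]

end Multi



section Main
variable {σ : ℝ}

lemma sigv (hσ : 0 < σ) : (⟨σ^2, sq_nonneg σ⟩ : ℝ≥0) ≠ 0 := by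
  intro h
  have h2 : σ^2 = 0 := congrArg NNReal.toReal h
  nlinarith

lemma integrable01 {γ : Type*} [MeasurableSpace γ] (μ : Measure γ) [IsFiniteMeasure μ]
    (f : γ → ℝ) (hf : AEStronglyMeasurable f μ) (hb : ∀ z, f z ∈ Set.Icc (0:ℝ) 1) :
    Integrable f μ := by
  apply Integrable.mono' (integrable_const 1) hf
  filter_upwards with z
  rw [Real.norm_eq_abs, abs_le]; exact ⟨by linarith [(hb z).1], (hb z).2⟩

lemma isoGaussian_eq_withDensity (d : ℕ) (hσ : 0 < σ) :
    isoGaussian d σ = (volume : Measure (EuclideanSpace ℝ (Fin d))).withDensity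
      (gaussDens ⟨σ^2, sq_nonneg σ⟩ d) := by
  rw [isoGaussian_eq', pi_gauss_eq (sigv hσ)]
  have h1 : (fun w : Fin d → ℝ => ∏ i, gaussianPDF 0 ⟨σ^2, sq_nonneg σ⟩ (w i))
      = fun w => gaussDens ⟨σ^2, sq_nonneg σ⟩ d
          ((EuclideanSpace.measurableEquiv (Fin d)).symm w) :=
    funext fun w => prod_gaussPDF d w
  rw [h1]
  erw [MeasurableEquiv.map_withDensity' _ _ _ (measurable_gaussDens _ _)]
  rw [((EuclideanSpace.volume_preserving_symm_measurableEquiv_toLp (Fin d)).symm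
      (EuclideanSpace.measurableEquiv (Fin d))).map_eq]

lemma isoGaussian_map_rot (d : ℕ) (hσ : 0 < σ)
    (O : EuclideanSpace ℝ (Fin d) ≃ₗᵢ[ℝ] EuclideanSpace ℝ (Fin d)) :
    Measure.map O (isoGaussian d σ) = isoGaussian d σ := by
  rw [isoGaussian_eq_withDensity d hσ]
  set v : ℝ≥0 := ⟨σ^2, sq_nonneg σ⟩ with hv
  set T : EuclideanSpace ℝ (Fin d) ≃ᵐ EuclideanSpace ℝ (Fin d) :=
    O.toHomeomorph.toMeasurableEquiv with hT
  have hTO : ⇑T = ⇑O := rfl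
  have hcomp : (fun z => gaussDens v d (T z)) = gaussDens v d := by
    funext z
    unfold gaussDens
    rw [hTO]
    simp only [O.norm_map]
  conv_lhs => rw [← hTO, ← hcomp]
  rw [MeasurableEquiv.map_withDensity' T volume _ (measurable_gaussDens v d)]
  have hvol : Measure.map ⇑T volume = volume := by
    rw [hTO]; exact O.measurePreserving.map_eq
  rw [hvol]

lemma shift_first (n : ℕ) (hσ : 0 < σ) (H : EuclideanSpace ℝ (Fin (n+1)) → ℝ)
    (hHm : Measurable H) (hHb : ∀ z, H z ∈ Set.Icc (0:ℝ) 1) (c : ℝ) (hc : 0 ≤ c) :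
    (∫ ε, H (c • EuclideanSpace.single (0 : Fin (n+1)) (1:ℝ) + ε) ∂(isoGaussian (n+1) σ))
      - ∫ ε, H ε ∂(isoGaussian (n+1) σ)
      ≤ c * (Real.sqrt (2 * π * ((⟨σ^2, sq_nonneg σ⟩ : ℝ≥0) : ℝ)))⁻¹ := by
  classical
  set v : ℝ≥0 := ⟨σ^2, sq_nonneg σ⟩ with hvdef
  have hv : v ≠ 0 := sigv hσ
  set ν := gaussianReal 0 v with hν
  set e := EuclideanSpace.measurableEquiv (Fin (n+1)) with he
  set u : EuclideanSpace ℝ (Fin (n+1)) :=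
    c • EuclideanSpace.single (0 : Fin (n+1)) (1:ℝ) with hu
  have hadd : Measurable fun ε : EuclideanSpace ℝ (Fin (n+1)) => u + ε :=
    (continuous_const.add continuous_id).measurable
  have hH1 : AEStronglyMeasurable (fun ε : EuclideanSpace ℝ (Fin (n+1)) => H (u + ε))
      (Measure.map (⇑e.symm) (Measure.pi fun _ : Fin (n+1) => ν)) :=
    (hHm.comp hadd).aestronglyMeasurable
  have hH0 : AEStronglyMeasurable H
      (Measure.map (⇑e.symm) (Measure.pi fun _ : Fin (n+1) => ν)) :=
    hHm.aestronglyMeasurable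
  rw [isoGaussian_eq', integral_map e.symm.measurable.aemeasurable hH1,
    integral_map e.symm.measurable.aemeasurable hH0]
  have hT := measurePreserving_piFinSuccAbove (fun _ : Fin (n+1) => ν) 0
  set T := MeasurableEquiv.piFinSuccAbove (fun _ : Fin (n+1) => ℝ) 0 with hTdef
  set G : ℝ × (Fin n → ℝ) → ℝ := fun z => H (e.symm (T.symm z)) with hG
  have hGm : Measurable G := hHm.comp (e.symm.measurable.comp T.symm.measurable)
  have hGb : ∀ z, G z ∈ Set.Icc (0:ℝ) 1 := fun z => hHb _
  have key0 : ∀ w, H (e.symm w) = G (T w) := by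
    intro w; rw [hG]; simp
  have key1 : ∀ w, H (u + e.symm w) = G ((T w).1 + c, (T w).2) := by
    intro w
    congr 1
    have hTw1 : (T w).1 = w 0 := rfl
    have hTw2 : (T w).2 = fun j => w j.succ := rfl
    rw [hTw1, hTw2]
    ext i
    show u i + w i = (e.symm (T.symm (w 0 + c, fun j => w j.succ))) i
    have hR : (e.symm (T.symm (w 0 + c, fun j => w j.succ))) i
        = (Fin.cons (w 0 + c) (fun j => w j.succ) : Fin (n+1) → ℝ) i := by
      show (@Fin.insertNth n (fun _ => ℝ) 0 (w 0 + c) (fun j => w j.succ)) i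
        = (Fin.cons (w 0 + c) (fun j => w j.succ) : Fin (n+1) → ℝ) i
      rw [Fin.insertNth_zero']
    rw [hR]
    induction i using Fin.cases with
    | zero =>
      rw [Fin.cons_zero, hu]
      simp [EuclideanSpace.single_apply]
      ring
    | succ j =>
      rw [Fin.cons_succ, hu]
      simp [EuclideanSpace.single_apply, Fin.succ_ne_zero]
  simp only [key0, key1]
  set P := (ν.prod (Measure.pi fun _ : Fin n => ν)) with hP
  have hι1 : Integrable (fun z => G (z.1 + c, z.2)) P :=
    integrable01 P _ (hGm.comp ((measurable_fst.add_const c).prodMk measurable_snd)).aestronglyMeasurable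
      fun z => hGb _
  have hι0 : Integrable G P := integrable01 P _ hGm.aestronglyMeasurable hGb
  rw [hT.integral_comp T.measurableEmbedding (fun z => G (z.1 + c, z.2)),
    hT.integral_comp T.measurableEmbedding G,
    integral_prod_symm _ hι1, integral_prod_symm _ hι0]
  have hI1 : Integrable (fun r => ∫ t, G (t + c, r) ∂ν) (Measure.pi fun _ : Fin n => ν) :=
    hι1.integral_prod_right
  have hI0 : Integrable (fun r => ∫ t, G (t, r) ∂ν) (Measure.pi fun _ : Fin n => ν) :=
    hι0.integral_prod_right
  rw [← integral_sub hI1 hI0]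
  calc ∫ r, ((∫ t, G (t + c, r) ∂ν) - ∫ t, G (t, r) ∂ν) ∂(Measure.pi fun _ : Fin n => ν)
      ≤ ∫ _r, c * (Real.sqrt (2 * π * (v:ℝ)))⁻¹ ∂(Measure.pi fun _ : Fin n => ν) := by
        apply integral_mono (hI1.sub hI0) (integrable_const _)
        intro r
        rw [Pi.sub_apply]
        have hsec : Measurable fun t => G (t, r) :=
          hGm.comp (measurable_id.prodMk measurable_const)
        have h1 : ∫ t, G (t + c, r) ∂ν = ∫ t, G (c + t, r) ∂ν := by
          congr 1; funext t; rw [add_comm]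
        rw [h1]
        exact oneD_shift hv (fun t => G (t, r)) hsec (fun t => hGb _) c hc
    _ = c * (Real.sqrt (2 * π * (v:ℝ)))⁻¹ := by
        rw [integral_const]
        simp

end Main

theorem smoothing_lipschitz (d : ℕ) (σ : ℝ) (hσ : 0 < σ)
    (h : EuclideanSpace ℝ (Fin d) → ℝ) (hm : Measurable h)
    (hb : ∀ z, h z ∈ Set.Icc (0:ℝ) 1) :
    ∀ x y : EuclideanSpace ℝ (Fin d),
      |(∫ ε, h (x + ε) ∂(isoGaussian d σ)) - ∫ ε, h (y + ε) ∂(isoGaussian d σ)| ≤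
        ‖x - y‖ / (σ * Real.sqrt (2 * π)) := by
  have hsqrt : Real.sqrt (2 * π * ((⟨σ^2, sq_nonneg σ⟩ : ℝ≥0) : ℝ)) = σ * Real.sqrt (2 * π) := by
    have h2 : ((⟨σ^2, sq_nonneg σ⟩ : ℝ≥0) : ℝ) = σ^2 := rfl
    rw [h2, Real.sqrt_mul (by positivity), Real.sqrt_sq hσ.le, mul_comm]
  obtain _ | n := d
  · intro x y
    have hxy : x = y := Subsingleton.elim x y
    rw [hxy, sub_self, abs_zero]
    positivity
  · intro x y
    have key : ∀ p q : EuclideanSpace ℝ (Fin (n+1)),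
        (∫ ε, h (p + ε) ∂(isoGaussian (n+1) σ)) - ∫ ε, h (q + ε) ∂(isoGaussian (n+1) σ)
          ≤ ‖p - q‖ / (σ * Real.sqrt (2 * π)) := by
      intro p q
      set c := ‖p - q‖ with hc
      have hc0 : 0 ≤ c := norm_nonneg _
      have hnorm : ‖c • EuclideanSpace.single (0 : Fin (n+1)) (1:ℝ)‖ = ‖p - q‖ := by
        rw [norm_smul, EuclideanSpace.norm_single]
        simp [Real.norm_eq_abs, abs_of_nonneg hc0, hc]
      set O := Submodule.reflection
        (Submodule.span ℝ {c • EuclideanSpace.single (0 : Fin (n+1)) (1:ℝ) - (p - q)})ᗮ with hO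
      have hOv : O (c • EuclideanSpace.single (0 : Fin (n+1)) (1:ℝ)) = p - q :=
        Submodule.reflection_sub hnorm
      set H : EuclideanSpace ℝ (Fin (n+1)) → ℝ := fun ε => h (q + O ε) with hH
      have hHm : Measurable H :=
        hm.comp ((continuous_const.add O.continuous).measurable)
      have hHb : ∀ z, H z ∈ Set.Icc (0:ℝ) 1 := fun z => hb _
      have hrot : ∀ g : EuclideanSpace ℝ (Fin (n+1)) → ℝ, Measurable g →
          ∫ ε, g (O ε) ∂(isoGaussian (n+1) σ) = ∫ ε, g ε ∂(isoGaussian (n+1) σ) := by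
        intro g hg
        conv_rhs => rw [← isoGaussian_map_rot (n+1) hσ O]
        rw [integral_map O.continuous.measurable.aemeasurable hg.aestronglyMeasurable]
      have e1 : ∫ ε, h (p + ε) ∂(isoGaussian (n+1) σ)
          = ∫ ε, H (c • EuclideanSpace.single (0 : Fin (n+1)) (1:ℝ) + ε)
              ∂(isoGaussian (n+1) σ) := by
        rw [← hrot (fun ε => h (p + ε))
          (hm.comp ((continuous_const.add continuous_id).measurable))]
        congr 1
        funext ε
        show h (p + O ε) = h (q + O (c • EuclideanSpace.single (0 : Fin (n+1)) (1:ℝ) + ε))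
        congr 1
        rw [map_add, hOv]
        abel
      have e2 : ∫ ε, h (q + ε) ∂(isoGaussian (n+1) σ) = ∫ ε, H ε ∂(isoGaussian (n+1) σ) := by
        rw [← hrot (fun ε => h (q + ε))
          (hm.comp ((continuous_const.add continuous_id).measurable))]
      rw [e1, e2]
      calc (∫ ε, H (c • EuclideanSpace.single (0 : Fin (n+1)) (1:ℝ) + ε)
              ∂(isoGaussian (n+1) σ)) - ∫ ε, H ε ∂(isoGaussian (n+1) σ)
          ≤ c * (Real.sqrt (2 * π * ((⟨σ^2, sq_nonneg σ⟩ : ℝ≥0) : ℝ)))⁻¹ :=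
            shift_first n hσ H hHm hHb c hc0
        _ = ‖p - q‖ / (σ * Real.sqrt (2 * π)) := by rw [hsqrt, div_eq_mul_inv]
    rw [abs_sub_le_iff]
    refine ⟨key x y, ?_⟩
    have h2 := key y x
    rwa [norm_sub_rev] at h2
end
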